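/- arXiv:2605.31484 — 7 statements merged into one kernel-verified Lean document; each statement's English description precedes it below -/
import Mathlib

section
/- Suppose gradient descent with step size γ > 0 on a twice continuously differentiable function f converges to a minimizer θ* at which the Hessian H has largest eigenvalue L and smallest nonzero eigenvalue μ > 0, and the iterates eventually stay in the affine subspace θ* + ker(H)^⊥ shifted appropriately. Then limsup_{t→∞} (f(θ_{t+1}) − f(θ*))/(f(θ_t) − f(θ*)) ≤ max((1 − γμ)², (1 − γL)²). -/
/-!
Write `v = θ - θ*` and `T` for the Hessian, viewed as a self-adjoint operator. By Taylor's
theorem the loss gap is `⟪T v, v⟫ / 2 + o(‖v‖²)`, and one step of gradient descent maps `v` to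
`v - γ T v + o(‖v‖)`. In an eigenbasis of `T` the exact linear step multiplies the `i`-th term of
`⟪T v, v⟫ = ∑ λᵢ vᵢ²` by `(1 - γ λᵢ)²`, which by convexity is at most
`ρ = max ((1 - γ μ)²) ((1 - γ L)²)`, so the next loss gap is at most `ρ` times the current one
up to `o(‖v‖²)`. Orthogonality to `ker T` gives `⟪T v, v⟫ ≥ μ ‖v‖²`, so this error is
`o` of the loss gap itself.
-/

open Matrix Filter Set Asymptotics InnerProductSpace
open scoped RealInnerProductSpace Topology Gradient

theorem one_sub_mul_sq_le_max (γ : ℝ) {μ L c : ℝ} (hc : c ∈ Icc μ L) :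
    (1 - γ * c) ^ 2 ≤ max ((1 - γ * μ) ^ 2) ((1 - γ * L) ^ 2) := by
  have hconv := (Even.convexOn_pow (𝕜 := ℝ) even_two).comp_affineMap
    (AffineMap.lineMap (1 : ℝ) (1 - γ))
  rw [preimage_univ] at hconv
  have hline : ∀ x, AffineMap.lineMap (1 : ℝ) (1 - γ) x = 1 - γ * x := fun x => by
    rw [AffineMap.lineMap_apply_ring']; ring
  simpa only [Function.comp_apply, hline] using
    hconv.le_max_of_mem_Icc (mem_univ _) (mem_univ _) hc

namespace LinearMap.IsSymmetric

variable {E : Type*} [NormedAddCommGroup E] [InnerProductSpace ℝ E] [FiniteDimensional ℝ E]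
  {T : E →ₗ[ℝ] E} {μ L : ℝ}

theorem inner_map_self_eq_sum (hT : T.IsSymmetric) (v : E) :
    ⟪T v, v⟫ = ∑ i, hT.eigenvalues rfl i * (hT.eigenvectorBasis rfl).repr v i ^ 2 := by
  rw [← (hT.eigenvectorBasis rfl).repr.inner_map_map, PiLp.inner_apply]
  refine Finset.sum_congr rfl fun i _ => ?_
  simp [eigenvectorBasis_apply_self_apply]
  ring

theorem eigenvalues_eq_zero_or_mem_Icc (hT : T.IsSymmetric)
    (hspec : ∀ c, Module.End.HasEigenvalue T c → c = 0 ∨ c ∈ Icc μ L) (i : Fin _) :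
    hT.eigenvalues rfl i = 0 ∨ hT.eigenvalues rfl i ∈ Icc μ L :=
  hspec _ (hT.hasEigenvalue_eigenvalues rfl i)

theorem mul_norm_sq_le_inner_map_self (hT : T.IsSymmetric)
    (hspec : ∀ c, Module.End.HasEigenvalue T c → c = 0 ∨ c ∈ Icc μ L) {v : E}
    (hv : ∀ w, T w = 0 → ⟪v, w⟫ = 0) : μ * ‖v‖ ^ 2 ≤ ⟪T v, v⟫ := by
  set b := hT.eigenvectorBasis rfl
  have hnorm : ‖v‖ ^ 2 = ∑ i, b.repr v i ^ 2 := by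
    rw [← b.repr.norm_map, EuclideanSpace.norm_sq_eq]
    simp
  rw [hT.inner_map_self_eq_sum, hnorm, Finset.mul_sum]
  refine Finset.sum_le_sum fun i _ => ?_
  rcases hT.eigenvalues_eq_zero_or_mem_Icc hspec i with h | h
  · have : b.repr v i = 0 := by
      rw [b.repr_apply_apply, real_inner_comm]
      exact hv _ (by rw [hT.apply_eigenvectorBasis, h]; simp)
    simp [this, h]
  · exact mul_le_mul_of_nonneg_right h.1 (sq_nonneg _)

theorem inner_map_sub_smul_map_le (hT : T.IsSymmetric)
    (hspec : ∀ c, Module.End.HasEigenvalue T c → c = 0 ∨ c ∈ Icc μ L) (hμ : 0 ≤ μ)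
    (γ : ℝ) (v : E) :
    ⟪T (v - γ • T v), v - γ • T v⟫ ≤ max ((1 - γ * μ) ^ 2) ((1 - γ * L) ^ 2) * ⟪T v, v⟫ := by
  set b := hT.eigenvectorBasis rfl
  rw [hT.inner_map_self_eq_sum, hT.inner_map_self_eq_sum, Finset.mul_sum]
  refine Finset.sum_le_sum fun i _ => ?_
  have hrepr : b.repr (v - γ • T v) i = (1 - γ * hT.eigenvalues rfl i) * b.repr v i := by
    simp [b, eigenvectorBasis_apply_self_apply]
    ring
  rw [hrepr]
  rcases hT.eigenvalues_eq_zero_or_mem_Icc hspec i with h | ⟨hμc, hcL⟩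
  · simp [h]
  · have := mul_le_mul_of_nonneg_left (one_sub_mul_sq_le_max γ ⟨hμc, hcL⟩)
      (mul_nonneg (hμ.trans hμc) (sq_nonneg (b.repr v i)))
    linarith

end LinearMap.IsSymmetric

section Quadratic

variable {E : Type*} [NormedAddCommGroup E] [InnerProductSpace ℝ E]

theorem LinearMap.IsSymmetric.inner_map_self_sub_inner_map_self {T : E →ₗ[ℝ] E}
    (hT : T.IsSymmetric) (a b : E) : ⟪T a, a⟫ - ⟪T b, b⟫ = ⟪T (a - b), a + b⟫ := by
  simp only [map_sub, inner_sub_left, inner_add_right, hT b a, real_inner_comm (T a) b]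
  ring

theorem isLittleO_inner_map_self_sub {α : Type*} {l : Filter α} {T : E →L[ℝ] E}
    (hT : (T : E →ₗ[ℝ] E).IsSymmetric) {a b g : α → E} (hab : (fun t => a t - b t) =o[l] g)
    (hb : b =O[l] g) :
    (fun t => ⟪T (a t), a t⟫ - ⟪T (b t), b t⟫) =o[l] fun t => ‖g t‖ ^ 2 := by
  have hsum : (fun t => a t + b t) =O[l] g := by
    simpa [sub_add_cancel, two_smul, add_assoc] using hab.isBigO.add (hb.add hb)
  simp_rw [← ContinuousLinearMap.coe_coe T, hT.inner_map_self_sub_inner_map_self, sq,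
    ContinuousLinearMap.coe_coe]
  exact isBoundedBilinearMap_inner.isBigO_comp.trans_isLittleO
    (((T.isBigO_comp _ l).trans_isLittleO hab).norm_norm.mul_isBigO hsum.norm_norm)

end Quadratic

section Calculus

variable {E : Type*} [NormedAddCommGroup E] [InnerProductSpace ℝ E] [CompleteSpace E]
  {f : E → ℝ} {x : E}

theorem ContDiffAt.gradient {m n : WithTop ℕ∞} (hf : ContDiffAt ℝ n f x) (hmn : m + 1 ≤ n) :
    ContDiffAt ℝ m (∇ f) x :=
  (toDual ℝ E).symm.contDiff.contDiffAt.comp x (hf.fderiv_right hmn)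

theorem inner_fderiv_gradient_apply (hf : DifferentiableAt ℝ (∇ f) x) (u v : E) :
    ⟪fderiv ℝ (∇ f) x u, v⟫ = fderiv ℝ (fun y => fderiv ℝ f y v) x u := by
  rw [show (fun y => fderiv ℝ f y v) = fun y => ⟪∇ f y, v⟫ from
    funext fun y => inner_gradient_left.symm, fderiv_inner_apply ℝ hf (differentiableAt_const v)]
  simp

theorem isSymmetric_fderiv_gradient (hf : ContDiffAt ℝ 2 f x) :
    (fderiv ℝ (∇ f) x : E →ₗ[ℝ] E).IsSymmetric := by
  have hdiff : DifferentiableAt ℝ (fderiv ℝ f) x :=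
    (hf.fderiv_right (m := 1) le_rfl).differentiableAt one_ne_zero
  have hgrad_diff : DifferentiableAt ℝ (∇ f) x :=
    (hf.gradient le_rfl).differentiableAt one_ne_zero
  intro u v
  change ⟪fderiv ℝ (∇ f) x u, v⟫ = ⟪u, fderiv ℝ (∇ f) x v⟫
  rw [real_inner_comm (fderiv ℝ (∇ f) x v), inner_fderiv_gradient_apply hgrad_diff,
    inner_fderiv_gradient_apply hgrad_diff, fderiv_clm_apply hdiff (differentiableAt_const _),
    fderiv_clm_apply hdiff (differentiableAt_const _)]
  simpa using (hf.isSymmSndFDerivAt (by simp)).eq u v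

theorem isLittleO_sub_sub_inner_half (hf : Differentiable ℝ f) {T : E →L[ℝ] E}
    (hT : HasFDerivAt (∇ f) T x) (hTsym : (T : E →ₗ[ℝ] E).IsSymmetric) (hx : ∇ f x = 0) :
    (fun y => f y - f x - ⟪T (y - x), y - x⟫ / 2) =o[𝓝 x] fun y => ‖y - x‖ ^ 2 := by
  have hderiv : ∀ y, HasFDerivAt (fun y => f y - ⟪T (y - x), y - x⟫ / 2)
      (toDual ℝ E (∇ f y - T (y - x))) y := by
    intro y
    have hquad : HasFDerivAt (fun y => ⟪T (y - x), y - x⟫ / 2) (toDual ℝ E (T (y - x))) y := by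
      have hshift : HasFDerivAt (fun y => y - x) (ContinuousLinearMap.id ℝ E) y :=
        (hasFDerivAt_id y).sub_const x
      have hinner := ((T.hasFDerivAt.comp y hshift).inner ℝ hshift).mul_const (1 / 2 : ℝ)
      refine (hinner.congr_fderiv ?_).congr_of_eventuallyEq
        (Eventually.of_forall fun w => by simp [div_eq_mul_inv])
      ext w
      have hsymm : ⟪T w, y - x⟫ = ⟪T (y - x), w⟫ :=
        (hTsym w (y - x)).trans (real_inner_comm _ _)
      simp only [FunLike.coe_smul, Pi.smul_apply, ContinuousLinearMap.comp_apply,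
        ContinuousLinearMap.prod_apply, fderivInnerCLM_apply, Function.comp_apply,
        ContinuousLinearMap.id_apply, toDual_apply_apply, hsymm, smul_eq_mul]
      ring
    rw [map_sub]
    exact (hasGradientAt_iff_hasFDerivAt.mp (hf y).hasGradientAt).sub hquad
  have hderiv_small : (fun y => toDual ℝ E (∇ f y - T (y - x))) =o[𝓝[univ] x]
      fun y => ‖y - x‖ ^ 1 := by
    simp only [nhdsWithin_univ, pow_one]
    have hlin := hasFDerivAt_iff_isLittleO.mp hT
    simp only [hx, sub_zero] at hlin
    rw [← isLittleO_norm_left]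
    simpa only [LinearIsometryEquiv.norm_map, isLittleO_norm_left] using hlin.norm_right
  have := convex_univ.isLittleO_pow_succ (mem_univ x) (fun y _ => (hderiv y).hasFDerivWithinAt)
    hderiv_small
  simp only [nhdsWithin_univ, sub_self, map_zero, inner_zero_left, zero_div, sub_zero] at this
  exact this.congr_left fun y => by ring

theorem isLittleO_gradient_step_sub_linear_step {f : E → ℝ} {T : E →L[ℝ] E} {θs : E}
    (hT : HasFDerivAt (∇ f) T θs) (hgrad : ∇ f θs = 0) {γ : ℝ} {θ : ℕ → E}
    (hstep : ∀ t, θ (t + 1) = θ t - γ • ∇ f (θ t)) (hconv : Tendsto θ atTop (𝓝 θs)) :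
    (fun t => (θ (t + 1) - θs) - (θ t - θs - γ • T (θ t - θs))) =o[atTop] fun t => θ t - θs := by
  have hlin := (hasFDerivAt_iff_isLittleO.mp hT).comp_tendsto hconv
  simp only [hgrad, sub_zero] at hlin
  refine (hlin.const_smul_left γ).neg_left.congr_left fun t => ?_
  simp only [Pi.smul_apply, Function.comp_apply, hstep, smul_sub, map_sub]
  abel

end Calculus

theorem limsup_div_le_of_le_add_isLittleO {α : Type*} {l : Filter α} [l.NeBot]
    {x y r : α → ℝ} {ρ : ℝ} (hρ : 0 ≤ ρ) (hx : ∀ᶠ t in l, 0 ≤ x t) (hy : ∀ᶠ t in l, 0 ≤ y t)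
    (hle : ∀ᶠ t in l, x t ≤ ρ * y t + r t) (hr : r =o[l] y) :
    limsup (fun t => x t / y t) l ≤ ρ := by
  refine le_of_forall_pos_le_add fun ε hε => limsup_le_of_le ?_ ?_
  · exact isCoboundedUnder_le_of_eventually_le l (x := 0)
      (by filter_upwards [hx, hy] with t hxt hyt using div_nonneg hxt hyt)
  · filter_upwards [hle, hy, hr.bound hε] with t hle hyt hrt
    rw [Real.norm_of_nonneg hyt] at hrt
    rcases hyt.eq_or_lt with hy0 | hypos
    · rw [← hy0, div_zero]
      linarith
    · rw [div_le_iff₀ hypos]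
      linarith [le_abs_self (r t), Real.norm_eq_abs (r t)]

section GradientDescent

variable {E : Type*} [NormedAddCommGroup E] [InnerProductSpace ℝ E] [FiniteDimensional ℝ E]

theorem limsup_gradientDescent_loss_ratio_le {f : E → ℝ} (hf : Differentiable ℝ f)
    {T : E →L[ℝ] E} {θs : E} (hT : HasFDerivAt (∇ f) T θs)
    (hTsym : (T : E →ₗ[ℝ] E).IsSymmetric) {μ L : ℝ}
    (hspec : ∀ c, Module.End.HasEigenvalue (T : E →ₗ[ℝ] E) c → c = 0 ∨ c ∈ Icc μ L)
    (hμ : 0 < μ) {γ : ℝ} {θ : ℕ → E} (hstep : ∀ t, θ (t + 1) = θ t - γ • ∇ f (θ t))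
    (hconv : Tendsto θ atTop (𝓝 θs)) (hmin : ∀ x, f θs ≤ f x)
    (hker : ∀ᶠ t in atTop, ∀ w, T w = 0 → ⟪θ t - θs, w⟫ = 0) :
    limsup (fun t => (f (θ (t + 1)) - f θs) / (f (θ t) - f θs)) atTop
      ≤ max ((1 - γ * μ) ^ 2) ((1 - γ * L) ^ 2) := by
  set ρ := max ((1 - γ * μ) ^ 2) ((1 - γ * L) ^ 2)
  set v : ℕ → E := fun t => θ t - θs
  have hgrad : ∇ f θs = 0 := by
    rw [gradient, ((isMinOn_univ_iff.mpr hmin).isLocalMin univ_mem).fderiv_eq_zero, map_zero]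
  have hstep_error := isLittleO_gradient_step_sub_linear_step hT hgrad hstep hconv
  have hlinear_step : (fun t => v t - γ • T (v t)) =O[atTop] v :=
    (isBigO_refl _ _).sub ((T.isBigO_comp v atTop).const_smul_left γ)
  have hnext : (fun t => v (t + 1)) =O[atTop] v :=
    (hstep_error.isBigO.add hlinear_step).congr_left fun t => sub_add_cancel _ _
  have htaylor := (isLittleO_sub_sub_inner_half hf hT hTsym hgrad).comp_tendsto hconv
  have htaylor_next : (fun t => f (θ (t + 1)) - f θs - ⟪T (v (t + 1)), v (t + 1)⟫ / 2)
      =o[atTop] fun t => ‖v t‖ ^ 2 :=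
    (htaylor.comp_tendsto (tendsto_add_atTop_nat 1)).trans_isBigO (hnext.norm_norm.pow 2)
  have hquad := isLittleO_inner_map_self_sub hTsym hstep_error hlinear_step
  have hrem : (fun t => (f (θ (t + 1)) - f θs) - ρ * (f (θ t) - f θs)
      - (⟪T (v t - γ • T (v t)), v t - γ • T (v t)⟫ - ρ * ⟪T (v t), v t⟫) / 2)
      =o[atTop] fun t => ‖v t‖ ^ 2 := by
    have := htaylor_next.add ((hquad.const_mul_left (1 / 2)).sub (htaylor.const_mul_left ρ))
    refine this.congr_left fun t => ?_
    simp only [v, Function.comp_apply]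
    ring
  have hcoercive : (fun t => ‖v t‖ ^ 2) =O[atTop] fun t => f (θ t) - f θs := by
    have hq := hker.mono fun t ht => hTsym.mul_norm_sq_le_inner_map_self hspec ht
    refine IsBigO.of_bound (4 / μ) ?_
    filter_upwards [hq, htaylor.bound (by positivity : 0 < μ / 4)] with t hqt ht
    simp only [v, Function.comp_apply, ContinuousLinearMap.coe_coe, Real.norm_eq_abs, norm_pow,
      abs_norm] at hqt ht ⊢
    rw [abs_of_nonneg (sub_nonneg.mpr (hmin _)), div_mul_eq_mul_div, le_div_iff₀ hμ]
    linarith [(abs_le.mp ht).1]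
  refine limsup_div_le_of_le_add_isLittleO (le_max_of_le_left (sq_nonneg _))
    (Eventually.of_forall fun t => sub_nonneg.mpr (hmin _))
    (Eventually.of_forall fun t => sub_nonneg.mpr (hmin _)) (Eventually.of_forall fun t => ?_)
    (hrem.trans_isBigO hcoercive)
  have := hTsym.inner_map_sub_smul_map_le hspec hμ.le γ (v t)
  simp only [ContinuousLinearMap.coe_coe] at this
  linarith

end GradientDescent

theorem Matrix.toEuclideanCLM_apply_eq_smul_iff {𝕜 n : Type*} [RCLike 𝕜] [Fintype n]
    [DecidableEq n] (A : Matrix n n 𝕜) (c : 𝕜) (w : EuclideanSpace 𝕜 n) :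
    toEuclideanCLM (𝕜 := 𝕜) A w = c • w ↔ A *ᵥ w.ofLp = c • w.ofLp := by
  rw [← (WithLp.ofLp_injective 2).eq_iff, ← WithLp.toLp_ofLp 2 w, toEuclideanCLM_toLp]
  simp

theorem stmt1_general {D : ℕ} (f : EuclideanSpace ℝ (Fin D) → ℝ) (hf : ContDiff ℝ 2 f)
    (γ : ℝ) (θ : ℕ → EuclideanSpace ℝ (Fin D))
    (hstep : ∀ t, θ (t + 1) = θ t - γ • gradient f (θ t))
    (θs : EuclideanSpace ℝ (Fin D))
    (hconv : Tendsto θ atTop (nhds θs))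
    (hmin : ∀ x, f θs ≤ f x)
    (H : Matrix (Fin D) (Fin D) ℝ)
    (hHess : ∀ u v : EuclideanSpace ℝ (Fin D),
      fderiv ℝ (fun x => fderiv ℝ f x v) θs u
        = dotProduct (H.mulVec fun i => u i) (fun i => v i))
    (L μ : ℝ)
    (hL : IsGreatest {c : ℝ | ∃ w : Fin D → ℝ, w ≠ 0 ∧ H.mulVec w = c • w} L)
    (hμ : IsLeast {c : ℝ | c ≠ 0 ∧ ∃ w : Fin D → ℝ, w ≠ 0 ∧ H.mulVec w = c • w} μ)
    (hμpos : 0 < μ)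
    (hker : ∀ᶠ t in atTop, ∀ v : Fin D → ℝ, H.mulVec v = 0 →
      dotProduct (fun i => (θ t - θs) i) v = 0) :
    limsup (fun t => (f (θ (t + 1)) - f θs) / (f (θ t) - f θs)) atTop
      ≤ max ((1 - γ * μ) ^ 2) ((1 - γ * L) ^ 2) := by
  have hgrad_diff : DifferentiableAt ℝ (∇ f) θs :=
    (hf.contDiffAt.gradient (m := 1) le_rfl).differentiableAt one_ne_zero
  have hHessian : fderiv ℝ (∇ f) θs = toEuclideanCLM (𝕜 := ℝ) H := by
    refine ContinuousLinearMap.ext fun u => ext_inner_right ℝ fun v => ?_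
    rw [inner_fderiv_gradient_apply hgrad_diff, hHess, ← WithLp.toLp_ofLp 2 u, toEuclideanCLM_toLp,
      EuclideanSpace.inner_eq_star_dotProduct]
    simp [dotProduct_comm]
  refine limsup_gradientDescent_loss_ratio_le (hf.differentiable two_ne_zero) hgrad_diff.hasFDerivAt
    (isSymmetric_fderiv_gradient hf.contDiffAt) ?_ hμpos hstep hconv hmin ?_
  · intro c hc
    rw [hHessian] at hc
    obtain ⟨w, hw, hw0⟩ := hc.exists_hasEigenvector
    rw [Module.End.mem_eigenspace_iff, ContinuousLinearMap.coe_coe,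
      toEuclideanCLM_apply_eq_smul_iff] at hw
    have hw0' := (WithLp.ofLp_eq_zero 2).not.mpr hw0
    by_cases hc0 : c = 0
    · exact Or.inl hc0
    · exact Or.inr ⟨hμ.2 ⟨hc0, _, hw0', hw⟩, hL.2 ⟨_, hw0', hw⟩⟩
  · filter_upwards [hker] with t ht w hw
    have hHw := (toEuclideanCLM_apply_eq_smul_iff H 0 w).mp (by rw [← hHessian, hw, zero_smul])
    rw [zero_smul] at hHw
    rw [EuclideanSpace.inner_eq_star_dotProduct, star_trivial, dotProduct_comm]
    exact ht _ hHw

/-- Gradient descent with step `γ` converging to a minimizer `θ*` with Hessian `H`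
having largest eigenvalue `L` and smallest nonzero eigenvalue `μ > 0`, with iterates
eventually in `θ* + ker(H)ᗮ`: the asymptotic loss ratio is at most
`max((1-γμ)², (1-γL)²)`. -/
theorem stmt1 {D : ℕ} (f : EuclideanSpace ℝ (Fin D) → ℝ) (hf : ContDiff ℝ 2 f)
    (γ : ℝ) (hγ : 0 < γ) (θ : ℕ → EuclideanSpace ℝ (Fin D))
    (hstep : ∀ t, θ (t + 1) = θ t - γ • gradient f (θ t))
    (θs : EuclideanSpace ℝ (Fin D))
    (hconv : Tendsto θ atTop (nhds θs))
    (hmin : ∀ x, f θs ≤ f x)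
    (H : Matrix (Fin D) (Fin D) ℝ)
    (hHess : ∀ u v : EuclideanSpace ℝ (Fin D),
      fderiv ℝ (fun x => fderiv ℝ f x v) θs u
        = dotProduct (H.mulVec fun i => u i) (fun i => v i))
    (L μ : ℝ)
    (hL : IsGreatest {c : ℝ | ∃ w : Fin D → ℝ, w ≠ 0 ∧ H.mulVec w = c • w} L)
    (hμ : IsLeast {c : ℝ | c ≠ 0 ∧ ∃ w : Fin D → ℝ, w ≠ 0 ∧ H.mulVec w = c • w} μ)
    (hμpos : 0 < μ)
    (hker : ∀ᶠ t in atTop, ∀ v : Fin D → ℝ, H.mulVec v = 0 →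
      dotProduct (fun i => (θ t - θs) i) v = 0) :
    limsup (fun t => (f (θ (t + 1)) - f θs) / (f (θ t) - f θs)) atTop
      ≤ max ((1 - γ * μ) ^ 2) ((1 - γ * L) ^ 2) :=
  stmt1_general f hf γ θ hstep θs hconv hmin H hHess L μ hL hμ hμpos hker
end

section
/- Let A ∈ ℝ^{a×r}, B ∈ ℝ^{r×b} both of rank r, and M = [B ⊗ I_a; I_b ⊗ Aᵀ] ∈ ℝ^{r(a+b)×ab}. Then the kernel of Mᵀ equals { vec(AR, −RB) : R ∈ ℝ^{r×r} } and has dimension r². -/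
open Matrix Kronecker

/-!
In the coordinates `vecp D E` the matrix `Mᵀ` acts as `(D, E) ↦ DB + AE`: this is the
Kronecker identity `vec X ᵥ* (B ⊗ A) = vec (Aᵀ X B)` applied to each block. Full rank makes `A`
left invertible and `B` right invertible, so `DB + AE = 0` forces `D = AR`, `E = -RB` with
`R = -E B'` for a right inverse `B'` of `B`. As `A` is left cancellable, `R ↦ (AR, -RB)` is
injective, and the kernel has dimension `r²`.
-/

/-- Vectorization of a pair `(D, E) ∈ ℝ^{a×r} × ℝ^{r×b}`, in the convention under which
`Mᵀ vec(D,E)` corresponds to `DB + AE` for `M = [B⊗I_a; I_b⊗Aᵀ]`. -/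
def vecp {a b r : ℕ} (D : Matrix (Fin a) (Fin r) ℝ) (E : Matrix (Fin r) (Fin b) ℝ) :
    (Fin r × Fin a) ⊕ (Fin b × Fin r) → ℝ :=
  Sum.elim (fun p => D p.2 p.1) (fun q => E q.2 q.1)

namespace Matrix

section Inverses

variable {K : Type*} [Field K] {m n : Type*} [Fintype m] [Fintype n]

theorem exists_right_inverse_of_rank_eq_card_height [DecidableEq m] {B : Matrix m n K}
    (h : B.rank = Fintype.card m) : ∃ C : Matrix n m K, B * C = 1 := by
  rw [← mulVec_surjective_iff_exists_right_inverse, ← coe_mulVecLin, ← LinearMap.range_eq_top]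
  apply Submodule.eq_top_of_finrank_eq
  rw [← rank, h, Module.finrank_fintype_fun_eq_card]

theorem exists_left_inverse_of_rank_eq_card_width [DecidableEq n] {A : Matrix m n K}
    (h : A.rank = Fintype.card n) : ∃ C : Matrix n m K, C * A = 1 := by
  obtain ⟨C, hC⟩ := exists_right_inverse_of_rank_eq_card_height (B := Aᵀ) (by rwa [rank_transpose])
  exact ⟨Cᵀ, by rw [← transpose_transpose A, ← transpose_mul, hC, transpose_one]⟩

end Inverses

theorem mul_add_mul_eq_zero_iff {R : Type*} [Ring R] {l n p : Type*} [Fintype l] [Fintype n]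
    [Fintype p] [DecidableEq n] {A : Matrix l n R} {B : Matrix n p R} {A' : Matrix n l R}
    {B' : Matrix p n R} (hA : A' * A = 1) (hB : B * B' = 1) (D : Matrix l n R)
    (E : Matrix n p R) : D * B + A * E = 0 ↔ ∃ X : Matrix n n R, D = A * X ∧ E = -(X * B) := by
  constructor
  · intro h
    have hD : D = A * -(E * B') := by
      rw [← Matrix.mul_one D, ← hB, ← Matrix.mul_assoc, eq_neg_of_add_eq_zero_left h]
      simp only [Matrix.neg_mul, Matrix.mul_neg, Matrix.mul_assoc]
    refine ⟨-(E * B'), hD, ?_⟩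
    have hAE : A * (E + -(E * B') * B) = 0 := by
      rw [Matrix.mul_add, ← Matrix.mul_assoc, ← hD, add_comm, h]
    have hEX : E + -(E * B') * B = 0 := by
      simpa only [← Matrix.mul_assoc, hA, Matrix.one_mul, Matrix.mul_zero]
        using congrArg (A' * ·) hAE
    exact eq_neg_of_add_eq_zero_left hEX
  · rintro ⟨X, rfl, rfl⟩
    rw [Matrix.mul_neg, Matrix.mul_assoc, add_neg_cancel]

theorem transpose_fromRows_kronecker_mulVec {R : Type*} [CommRing R] {l n p : Type*}
    [Fintype l] [Fintype n] [Fintype p] [DecidableEq l] [DecidableEq p]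
    (A : Matrix l n R) (B : Matrix n p R) (D : Matrix l n R) (E : Matrix n p R) :
    (fromRows (B ⊗ₖ (1 : Matrix l l R)) ((1 : Matrix p p R) ⊗ₖ Aᵀ))ᵀ *ᵥ Sum.elim (vec D) (vec E)
      = vec (D * B + A * E) := by
  rw [mulVec_transpose, sumElim_vecMul_fromRows, vec_vecMul_kronecker, vec_vecMul_kronecker]
  simp only [transpose_one, transpose_transpose, Matrix.one_mul, Matrix.mul_one, vec_add]

end Matrix

theorem vecp_eq_sumElim_vec {a b r : ℕ} (D : Matrix (Fin a) (Fin r) ℝ)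
    (E : Matrix (Fin r) (Fin b) ℝ) : vecp D E = Sum.elim (vec D) (vec E) := rfl

theorem vecp_inj {a b r : ℕ} {D D' : Matrix (Fin a) (Fin r) ℝ} {E E' : Matrix (Fin r) (Fin b) ℝ} :
    vecp D E = vecp D' E' ↔ D = D' ∧ E = E' :=
  Sum.elim_eq_iff.trans (and_congr vec_inj vec_inj)

theorem exists_vecp_eq {a b r : ℕ} (v : (Fin r × Fin a) ⊕ (Fin b × Fin r) → ℝ) :
    ∃ D E, v = vecp D E :=
  ⟨.of fun i k => v (.inl (k, i)), .of fun k j => v (.inr (j, k)), by ext (_ | _) <;> rfl⟩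

section KernelOfStackedKronecker

variable {a b r : ℕ} (A : Matrix (Fin a) (Fin r) ℝ) (B : Matrix (Fin r) (Fin b) ℝ)

def kerParametrization :
    Matrix (Fin r) (Fin r) ℝ →ₗ[ℝ] (Fin r × Fin a) ⊕ (Fin b × Fin r) → ℝ where
  toFun R := vecp (A * R) (-(R * B))
  map_add' R S := by
    ext (_ | _) <;> simp [vecp, Matrix.mul_add, Matrix.add_mul, add_comm]
  map_smul' c R := by
    ext (_ | _) <;> simp [vecp]

theorem kerParametrization_apply (R : Matrix (Fin r) (Fin r) ℝ) :
    kerParametrization A B R = vecp (A * R) (-(R * B)) := rfl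

variable {A B}

theorem kerParametrization_injective (hA : A.rank = r) :
    Function.Injective (kerParametrization A B) := by
  obtain ⟨A', hA'⟩ := exists_left_inverse_of_rank_eq_card_width (by rwa [Fintype.card_fin])
  intro R S h
  exact mul_right_injective_of_inv A' A hA' (vecp_inj.mp h).1

theorem ker_mulVecLin_eq_range_kerParametrization (hA : A.rank = r) (hB : B.rank = r) :
    LinearMap.ker (mulVecLin
        (fromRows (B ⊗ₖ (1 : Matrix (Fin a) (Fin a) ℝ)) ((1 : Matrix (Fin b) (Fin b) ℝ) ⊗ₖ Aᵀ))ᵀ)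
      = LinearMap.range (kerParametrization A B) := by
  obtain ⟨A', hA'⟩ := exists_left_inverse_of_rank_eq_card_width (by rwa [Fintype.card_fin])
  obtain ⟨B', hB'⟩ := exists_right_inverse_of_rank_eq_card_height (by rwa [Fintype.card_fin])
  ext v
  obtain ⟨D, E, rfl⟩ := exists_vecp_eq v
  rw [LinearMap.mem_ker, mulVecLin_apply, vecp_eq_sumElim_vec, transpose_fromRows_kronecker_mulVec,
    vec_eq_zero_iff, mul_add_mul_eq_zero_iff hA' hB', ← vecp_eq_sumElim_vec]
  simp only [LinearMap.mem_range, kerParametrization_apply, vecp_inj, eq_comm]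

end KernelOfStackedKronecker

/-- For full-rank `A, B`, the kernel of `Mᵀ` (for `M = [B⊗I_a; I_b⊗Aᵀ]`) is exactly
`{vec(AR, -RB) : R ∈ ℝ^{r×r}}` and has dimension `r²`. -/
theorem stmt4 {a b r : ℕ}
    (A : Matrix (Fin a) (Fin r) ℝ) (B : Matrix (Fin r) (Fin b) ℝ)
    (hA : A.rank = r) (hB : B.rank = r) :
    (∀ v : (Fin r × Fin a) ⊕ (Fin b × Fin r) → ℝ,
      (Matrix.fromRows (B ⊗ₖ (1 : Matrix (Fin a) (Fin a) ℝ))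
          ((1 : Matrix (Fin b) (Fin b) ℝ) ⊗ₖ Aᵀ))ᵀ.mulVec v = 0
        ↔ ∃ R : Matrix (Fin r) (Fin r) ℝ, v = vecp (A * R) (-(R * B))) ∧
    Module.finrank ℝ
        (LinearMap.ker (Matrix.mulVecLin
          (Matrix.fromRows (B ⊗ₖ (1 : Matrix (Fin a) (Fin a) ℝ))
            ((1 : Matrix (Fin b) (Fin b) ℝ) ⊗ₖ Aᵀ))ᵀ))
      = r ^ 2 := by
  have hker := ker_mulVecLin_eq_range_kerParametrization hA hB
  refine ⟨fun v => ?_, ?_⟩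
  · rw [← mulVecLin_apply, ← LinearMap.mem_ker, hker, LinearMap.mem_range]
    exact exists_congr fun R => eq_comm
  · rw [hker, LinearMap.finrank_range_of_inj (kerParametrization_injective hA),
      Module.finrank_matrix, Module.finrank_self, Fintype.card_fin, mul_one, sq]
end

section
/- Let Z ∈ ℝ^{a×b} have rank r and (A,B) a global minimizer of f(A,B) = (1/2)‖Z − AB‖_F² satisfying the balance condition AᵀA = BBᵀ. Then σ_i(A)² = σ_i(B)² = σ_i(Z) for all 1 ≤ i ≤ r, and the condition number (σ_1(A)² + σ_1(B)²)/min(σ_r(A)², σ_r(B)²) equals 2σ_1(Z)/σ_r(Z). -/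
open Matrix

/-- The `i`-th largest singular value (0-indexed) of a real matrix `M`: the square root of
the `i`-th largest eigenvalue of `MᴴM`. -/
noncomputable def sv {m n : ℕ} (M : Matrix (Fin m) (Fin n) ℝ) (i : Fin n) : ℝ :=
  Real.sqrt
    (((Matrix.isHermitian_conjTranspose_mul_self M).eigenvalues ∘
      ⇑(Tuple.sort (Matrix.isHermitian_conjTranspose_mul_self M).eigenvalues)) i.rev)

/-- LoRA loss `f(A,B) = (1/2) ‖Z - AB‖_F²`. -/
noncomputable def floss {a b r : ℕ} (Z : Matrix (Fin a) (Fin b) ℝ)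
    (A : Matrix (Fin a) (Fin r) ℝ) (B : Matrix (Fin r) (Fin b) ℝ) : ℝ :=
  (1 / 2) * ∑ i, ∑ j, (Z i j - (A * B) i j) ^ 2

/-!
At a global minimizer the loss vanishes, because a rank-`r` matrix factors through `ℝ^r`; hence
`Z = A * B`. Balance then gives `Zᵀ Z = Bᵀ (Aᵀ A) B = (Bᵀ B)²`, while `Bᵀ B` has the eigenvalues
of `B Bᵀ = Aᵀ A` together with `b - r` zeros. All these eigenvalues are nonnegative, so after
sorting, the `r` largest eigenvalues of `Aᵀ A` and `Bᵀ B` coincide, and those of `Zᵀ Z` are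
their squares; the condition number identity follows by substitution.
-/

open Polynomial

theorem Tuple.ofFn_comp_sort {α : Type*} [LinearOrder α] {n : ℕ} (f : Fin n → α) :
    List.ofFn (f ∘ Tuple.sort f) = (Finset.univ.val.map f).sort (· ≤ ·) :=
  List.Perm.eq_of_sortedLE (Tuple.monotone_sort f).sortedLE_ofFn
    (List.sortedLE_iff_pairwise.mpr (Multiset.pairwise_sort _ _))
    (by rw [← Multiset.coe_eq_coe, Multiset.sort_eq, Fin.univ_val_map,
      Multiset.coe_eq_coe]; exact (Tuple.sort f).ofFn_comp_perm f)

theorem Multiset.sort_replicate_add {α : Type*} [LinearOrder α] {a : α} {s : Multiset α}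
    (h : ∀ x ∈ s, a ≤ x) (k : ℕ) :
    (Multiset.replicate k a + s).sort (· ≤ ·) = List.replicate k a ++ s.sort (· ≤ ·) := by
  induction k with
  | zero => simp
  | succ k ih =>
    rw [Multiset.replicate_succ, Multiset.cons_add, Multiset.sort_cons, ih]
    · rfl
    · intro x hx
      rcases Multiset.mem_add.mp hx with hx | hx
      · rw [Multiset.eq_of_mem_replicate hx]
      · exact h x hx

namespace Matrix

theorem roots_charpoly_mul_comm_of_le {R : Type*} [CommRing R] [IsDomain R]
    {m n : Type*} [Fintype m] [Fintype n] [DecidableEq m] [DecidableEq n]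
    (A : Matrix m n R) (B : Matrix n m R) (hle : Fintype.card n ≤ Fintype.card m) :
    (A * B).charpoly.roots =
      Multiset.replicate (Fintype.card m - Fintype.card n) 0 + (B * A).charpoly.roots := by
  rw [charpoly_mul_comm_of_le A B hle, roots_mul, roots_X_pow, Multiset.nsmul_singleton]
  exact mul_ne_zero (pow_ne_zero _ X_ne_zero) (charpoly_monic _).ne_zero

theorem IsHermitian.roots_charpoly_mul_self {n : Type*} [Fintype n] [DecidableEq n]
    {M : Matrix n n ℝ} (hM : M.IsHermitian) :
    (M * M).charpoly.roots = M.charpoly.roots.map (· ^ 2) := by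
  rw [← sq, ← cfc_pow_id (R := ℝ) M 2 hM.isSelfAdjoint, hM.charpoly_cfc_eq, roots_prod,
    hM.roots_charpoly_eq_eigenvalues]
  · simp only [roots_X_sub_C, Multiset.bind_singleton, Multiset.map_map]
    rfl
  · exact Finset.prod_ne_zero_iff.mpr fun i _ => X_sub_C_ne_zero _

theorem IsHermitian.ofFn_eigenvalues_comp_sort {n : ℕ} {M : Matrix (Fin n) (Fin n) ℝ}
    (hM : M.IsHermitian) :
    List.ofFn (hM.eigenvalues ∘ Tuple.sort hM.eigenvalues) = M.charpoly.roots.sort (· ≤ ·) := by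
  rw [Tuple.ofFn_comp_sort, hM.roots_charpoly_eq_eigenvalues]
  rfl

theorem PosSemidef.nonneg_of_mem_roots_charpoly {n : Type*} [Fintype n] [DecidableEq n]
    {M : Matrix n n ℝ} (hM : M.PosSemidef) {x : ℝ} (hx : x ∈ M.charpoly.roots) : 0 ≤ x := by
  rw [hM.1.roots_charpoly_eq_eigenvalues] at hx
  obtain ⟨i, -, rfl⟩ := Multiset.mem_map.mp hx
  exact hM.eigenvalues_nonneg i

theorem posSemidef_transpose_mul_self {m n : Type*} [Fintype m] [Fintype n]
    (M : Matrix m n ℝ) : (Mᵀ * M).PosSemidef := by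
  simpa [conjTranspose_eq_transpose_of_trivial] using posSemidef_conjTranspose_mul_self M

theorem exists_mul_eq_of_rank_eq {a b r : ℕ} (Z : Matrix (Fin a) (Fin b) ℝ)
    (hZ : Z.rank = r) :
    ∃ (A : Matrix (Fin a) (Fin r) ℝ) (B : Matrix (Fin r) (Fin b) ℝ), A * B = Z := by
  -- `A` holds a basis of the column space of `Z`, `B` the coordinates of the columns of `Z`.
  let e : Module.Basis (Fin r) ℝ (LinearMap.range Z.mulVecLin) :=
    Module.finBasisOfFinrankEq ℝ _ hZ
  have hcol : ∀ j, (fun i => Z i j) ∈ LinearMap.range Z.mulVecLin := fun j =>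
    ⟨Pi.single j 1, by simp [mulVec_single]; rfl⟩
  refine ⟨of fun i k => (e k : Fin a → ℝ) i,
    of fun k j => e.repr ⟨_, hcol j⟩ k, ?_⟩
  ext i j
  have := congrArg (fun v : LinearMap.range Z.mulVecLin => (v : Fin a → ℝ) i)
    (e.sum_repr ⟨_, hcol j⟩)
  simp only [Submodule.coe_sum, Submodule.coe_smul, Finset.sum_apply, Pi.smul_apply,
    smul_eq_mul] at this
  simpa [mul_apply, mul_comm] using this

end Matrix

theorem sv_eq {m n : ℕ} (M : Matrix (Fin m) (Fin n) ℝ) (i : Fin n) :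
    sv M i = √(((Mᵀ * M).charpoly.roots.sort (· ≤ ·)).getD i.rev 0) := by
  rw [sv, ← conjTranspose_eq_transpose_of_trivial,
    ← (isHermitian_conjTranspose_mul_self M).ofFn_eigenvalues_comp_sort,
    List.getD_eq_getElem _ _ (by simpa using i.rev.isLt), List.getElem_ofFn]

theorem sv_nonneg {m n : ℕ} (M : Matrix (Fin m) (Fin n) ℝ) (i : Fin n) : 0 ≤ sv M i :=
  Real.sqrt_nonneg _

theorem sv_sq_eq_getD {m n : ℕ} (M : Matrix (Fin m) (Fin n) ℝ) (i : Fin n) :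
    sv M i ^ 2 = ((Mᵀ * M).charpoly.roots.sort (· ≤ ·)).getD i.rev 0 := by
  rw [sv_eq, Real.sq_sqrt]
  set L := (Mᵀ * M).charpoly.roots.sort (· ≤ ·)
  by_cases hi : (i.rev : ℕ) < L.length
  · rw [List.getD_eq_getElem _ _ hi]
    exact (posSemidef_transpose_mul_self M).nonneg_of_mem_roots_charpoly
      ((Multiset.mem_sort _).mp (List.getElem_mem hi))
  · rw [List.getD_eq_default _ _ (not_lt.mp hi)]

theorem sv_sq_eq_sv_mul_of_transpose_mul_self_eq {a b r : ℕ} (hrb : r ≤ b)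
    (A : Matrix (Fin a) (Fin r) ℝ) (B : Matrix (Fin r) (Fin b) ℝ) (hbal : Aᵀ * A = B * Bᵀ)
    (i : Fin r) :
    sv A i ^ 2 = sv (A * B) (Fin.castLE hrb i) ∧
      sv B (Fin.castLE hrb i) ^ 2 = sv (A * B) (Fin.castLE hrb i) := by
  set L := (B * Bᵀ).charpoly.roots.sort (· ≤ ·)
  have hBBt : (B * Bᵀ).PosSemidef := by
    simpa using posSemidef_transpose_mul_self Bᵀ
  have hBtB := posSemidef_transpose_mul_self B
  have hA : (Aᵀ * A).charpoly.roots.sort (· ≤ ·) = L := by rw [hbal]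
  have hB : (Bᵀ * B).charpoly.roots.sort (· ≤ ·) = List.replicate (b - r) 0 ++ L := by
    rw [roots_charpoly_mul_comm_of_le _ _ (by simpa using hrb), Fintype.card_fin,
      Fintype.card_fin, Multiset.sort_replicate_add]
    exact fun x hx => hBBt.nonneg_of_mem_roots_charpoly hx
  have hZ : ((A * B)ᵀ * (A * B)).charpoly.roots.sort (· ≤ ·)
      = (List.replicate (b - r) 0 ++ L).map (· ^ 2) := by
    have hsq : (A * B)ᵀ * (A * B) = (Bᵀ * B) * (Bᵀ * B) := by
      rw [transpose_mul, Matrix.mul_assoc, ← Matrix.mul_assoc Aᵀ, hbal]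
      simp only [Matrix.mul_assoc]
    rw [hsq, hBtB.1.roots_charpoly_mul_self, ← hB, Multiset.map_sort (· ^ 2) _ (· ≤ ·) (· ≤ ·)]
    intro x hx y hy
    exact (pow_le_pow_iff_left₀ (hBtB.nonneg_of_mem_roots_charpoly hx)
      (hBtB.nonneg_of_mem_roots_charpoly hy) two_ne_zero).symm
  have hrev : ((Fin.castLE hrb i).rev : ℕ) = (b - r) + i.rev := by
    simp only [Fin.val_rev, Fin.val_castLE]
    omega
  have hAB : sv B (Fin.castLE hrb i) ^ 2 = sv A i ^ 2 := by
    rw [sv_sq_eq_getD, sv_sq_eq_getD, hA, hB, hrev, List.getD_append_right _ _ _ _ (by simp)]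
    simp
  have hZB : sv (A * B) (Fin.castLE hrb i) = sv B (Fin.castLE hrb i) ^ 2 := by
    rw [← pow_left_inj₀ (sv_nonneg _ _) (sq_nonneg _) two_ne_zero, sv_sq_eq_getD,
      sv_sq_eq_getD, hZ, hB]
    exact (congrArg (List.getD _ _) (zero_pow two_ne_zero).symm).trans (List.getD_map _ _ _)
  exact ⟨hAB ▸ hZB.symm, hZB.symm⟩

section floss

variable {a b r : ℕ} (Z : Matrix (Fin a) (Fin b) ℝ) (A : Matrix (Fin a) (Fin r) ℝ)
  (B : Matrix (Fin r) (Fin b) ℝ)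

theorem floss_nonneg : 0 ≤ floss Z A B := by
  unfold floss
  positivity

theorem floss_eq_zero_iff : floss Z A B = 0 ↔ A * B = Z := by
  have hsq : ∀ i j, 0 ≤ (Z i j - (A * B) i j) ^ 2 := fun _ _ => sq_nonneg _
  rw [floss, mul_eq_zero, or_iff_right (by norm_num),
    Fintype.sum_eq_zero_iff_of_nonneg fun i => Finset.sum_nonneg fun j _ => hsq i j,
    ← Matrix.ext_iff, funext_iff]
  refine forall_congr' fun i => ?_
  rw [Pi.zero_apply, Fintype.sum_eq_zero_iff_of_nonneg (hsq i), funext_iff]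
  refine forall_congr' fun j => ?_
  rw [Pi.zero_apply, sq_eq_zero_iff, sub_eq_zero, eq_comm]

theorem mul_eq_of_forall_floss_le (hZ : Z.rank = r)
    (hmin : ∀ (A' : Matrix (Fin a) (Fin r) ℝ) B', floss Z A B ≤ floss Z A' B') : A * B = Z := by
  obtain ⟨A', B', hAB'⟩ := Z.exists_mul_eq_of_rank_eq hZ
  refine (floss_eq_zero_iff Z A B).mp (le_antisymm ?_ (floss_nonneg Z A B))
  exact (hmin A' B').trans ((floss_eq_zero_iff Z A' B').mpr hAB').le

end floss

theorem stmt7_general {a b r : ℕ} (hr : 0 < r) (hrb : r ≤ b)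
    (Z : Matrix (Fin a) (Fin b) ℝ) (hZ : Z.rank = r)
    (A : Matrix (Fin a) (Fin r) ℝ) (B : Matrix (Fin r) (Fin b) ℝ)
    (hmin : ∀ (A' : Matrix (Fin a) (Fin r) ℝ) (B' : Matrix (Fin r) (Fin b) ℝ),
      floss Z A B ≤ floss Z A' B')
    (hbal : Aᵀ * A = B * Bᵀ) :
    (∀ i : Fin r,
      sv A i ^ 2 = sv Z ⟨i, lt_of_lt_of_le i.2 hrb⟩ ∧
      sv B ⟨i, lt_of_lt_of_le i.2 hrb⟩ ^ 2 = sv Z ⟨i, lt_of_lt_of_le i.2 hrb⟩) ∧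
    (sv A ⟨0, hr⟩ ^ 2 + sv B ⟨0, lt_of_lt_of_le hr hrb⟩ ^ 2) /
        min (sv A ⟨r - 1, Nat.sub_lt hr one_pos⟩ ^ 2)
          (sv B ⟨r - 1, lt_of_lt_of_le (Nat.sub_lt hr one_pos) hrb⟩ ^ 2)
      = 2 * sv Z ⟨0, lt_of_lt_of_le hr hrb⟩ /
          sv Z ⟨r - 1, lt_of_lt_of_le (Nat.sub_lt hr one_pos) hrb⟩ := by
  obtain rfl := mul_eq_of_forall_floss_le Z A B hZ hmin
  have hsv := sv_sq_eq_sv_mul_of_transpose_mul_self_eq hrb A B hbal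
  refine ⟨hsv, ?_⟩
  obtain ⟨hA₁, hB₁⟩ := hsv ⟨0, hr⟩
  obtain ⟨hAr, hBr⟩ := hsv ⟨r - 1, Nat.sub_lt hr one_pos⟩
  simp only [Fin.castLE_mk] at hA₁ hB₁ hAr hBr
  rw [hA₁, hB₁, hAr, hBr, min_self, ← two_mul]

/-- At a balanced global minimizer `(A,B)` of `f` with `rk Z = r`:
`σ_i(A)² = σ_i(B)² = σ_i(Z)` for all `i`, and the condition number
`(σ_1(A)² + σ_1(B)²)/min(σ_r(A)², σ_r(B)²)` equals `2σ_1(Z)/σ_r(Z)`. -/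
theorem stmt7 {a b r : ℕ} (hr : 0 < r) (hra : r ≤ a) (hrb : r ≤ b)
    (Z : Matrix (Fin a) (Fin b) ℝ) (hZ : Z.rank = r)
    (A : Matrix (Fin a) (Fin r) ℝ) (B : Matrix (Fin r) (Fin b) ℝ)
    (hmin : ∀ (A' : Matrix (Fin a) (Fin r) ℝ) (B' : Matrix (Fin r) (Fin b) ℝ),
      floss Z A B ≤ floss Z A' B')
    (hbal : Aᵀ * A = B * Bᵀ) :
    (∀ i : Fin r,
      sv A i ^ 2 = sv Z ⟨i, lt_of_lt_of_le i.2 hrb⟩ ∧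
      sv B ⟨i, lt_of_lt_of_le i.2 hrb⟩ ^ 2 = sv Z ⟨i, lt_of_lt_of_le i.2 hrb⟩) ∧
    (sv A ⟨0, hr⟩ ^ 2 + sv B ⟨0, lt_of_lt_of_le hr hrb⟩ ^ 2) /
        min (sv A ⟨r - 1, Nat.sub_lt hr one_pos⟩ ^ 2)
          (sv B ⟨r - 1, lt_of_lt_of_le (Nat.sub_lt hr one_pos) hrb⟩ ^ 2)
      = 2 * sv Z ⟨0, lt_of_lt_of_le hr hrb⟩ /
          sv Z ⟨r - 1, lt_of_lt_of_le (Nat.sub_lt hr one_pos) hrb⟩ :=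
  stmt7_general hr hrb Z hZ A B hmin hbal
end

section
/- Let Z ∈ ℝ^{a×b} have rank r. Among all factorizations Z = AB with A ∈ ℝ^{a×r}, B ∈ ℝ^{r×b}, the quantity (σ_1(A)² + σ_1(B)²)/min(σ_r(A)², σ_r(B)²) is minimized by balanced factorizations (those with AᵀA = BBᵀ), and the minimum value is 2σ_1(Z)/σ_r(Z). -/
/-!
Write `σₖ` for singular values and `λₖ` for eigenvalues in increasing order. Courant–Fischer,
in the form "if `s ⟪T x, x⟫ ≤ t ⟪S x, x⟫` for all `x` then `s λₖ(T) ≤ t λₖ(S)`", applied to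
`‖A B x‖² ≤ σ₁(A)² ‖B x‖²` and `σᵣ(A)² ‖B x‖² ≤ ‖A B x‖²` gives `σ₁(AB) ≤ σ₁(A) σ₁(B)` and
`σᵣ(A) σᵣ(B) ≤ σᵣ(AB)`. As `rank Z = r`, both `σᵣ(A)` and `σᵣ(B)` are positive, and
`min (σᵣ(A)², σᵣ(B)²) ≤ σᵣ(A) σᵣ(B)`; with `2 σ₁(A) σ₁(B) ≤ σ₁(A)² + σ₁(B)²` this is the bound.

If `AᵀA = BBᵀ` then `ZᵀZ = (BᵀB)²`, so `σₖ(Z) = σₖ(B)²`, and `σₖ(A) = σₖ(Bᵀ) = σₖ(B)` because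
`Xʳ χ(BᵀB) = Xᵇ χ(BBᵀ)`. Both sides then equal `2 σ₁(B)² / σᵣ(B)²`.
-/

open Matrix

open Polynomial Module
open scoped RealInnerProductSpace

section MinMax

variable {E : Type*} [NormedAddCommGroup E] [InnerProductSpace ℝ E] {n : ℕ}
  {T : E →ₗ[ℝ] E} {b : OrthonormalBasis (Fin n) ℝ E} {μ : Fin n → ℝ}

theorem inner_apply_self_eq_sum (hb : ∀ i, T (b i) = μ i • b i) (x : E) :
    ⟪T x, x⟫ = ∑ i, μ i * ⟪b i, x⟫ ^ 2 := by
  have hTx : T x = ∑ i, (μ i * ⟪b i, x⟫) • b i := by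
    conv_lhs => rw [← b.sum_repr' x]
    simp only [map_sum, map_smul, hb, smul_smul, mul_comm]
  rw [hTx, sum_inner]
  simp only [real_inner_smul_right, real_inner_comm x]
  ring_nf

theorem OrthonormalBasis.inner_eq_zero_of_mem_span {S : Finset (Fin n)} {x : E}
    (hx : x ∈ Submodule.span ℝ (b '' S)) {j : Fin n} (hj : j ∉ S) : ⟪b j, x⟫ = 0 := by
  suffices Submodule.span ℝ (b '' S) ≤ (ℝ ∙ b j)ᗮ from
    Submodule.mem_orthogonal_singleton_iff_inner_right.mp (this hx)
  rw [Submodule.span_le]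
  rintro _ ⟨i, hi, rfl⟩
  exact Submodule.mem_orthogonal_singleton_iff_inner_right.mpr
    (b.orthonormal.2 fun h => hj (h ▸ hi))

theorem OrthonormalBasis.finrank_span_image (b : OrthonormalBasis (Fin n) ℝ E)
    (S : Finset (Fin n)) : finrank ℝ (Submodule.span ℝ (b '' S)) = S.card := by
  have h := finrank_span_eq_card
    (b.orthonormal.linearIndependent.comp (Subtype.val : S → Fin n) Subtype.val_injective)
  rw [Fintype.card_coe] at h
  rwa [Set.image_eq_range]

theorem inner_apply_self_le_of_mem_span (hb : ∀ i, T (b i) = μ i • b i) {S : Finset (Fin n)}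
    {c : ℝ} (hS : ∀ i ∈ S, μ i ≤ c) {x : E} (hx : x ∈ Submodule.span ℝ (b '' S)) :
    ⟪T x, x⟫ ≤ c * ‖x‖ ^ 2 := by
  rw [inner_apply_self_eq_sum hb, ← b.sum_sq_inner_right, Finset.mul_sum]
  refine Finset.sum_le_sum fun i _ => ?_
  by_cases hi : i ∈ S
  · exact mul_le_mul_of_nonneg_right (hS i hi) (sq_nonneg _)
  · simp [b.inner_eq_zero_of_mem_span hx hi]

theorem le_inner_apply_self_of_mem_span (hb : ∀ i, T (b i) = μ i • b i) {S : Finset (Fin n)}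
    {c : ℝ} (hS : ∀ i ∈ S, c ≤ μ i) {x : E} (hx : x ∈ Submodule.span ℝ (b '' S)) :
    c * ‖x‖ ^ 2 ≤ ⟪T x, x⟫ := by
  rw [inner_apply_self_eq_sum hb, ← b.sum_sq_inner_right, Finset.mul_sum]
  refine Finset.sum_le_sum fun i _ => ?_
  by_cases hi : i ∈ S
  · exact mul_le_mul_of_nonneg_right (hS i hi) (sq_nonneg _)
  · simp [b.inner_eq_zero_of_mem_span hx hi]

theorem OrthonormalBasis.mem_span_image_univ (b : OrthonormalBasis (Fin n) ℝ E) (x : E) :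
    x ∈ Submodule.span ℝ (b '' (Finset.univ : Finset (Fin n))) := by
  simpa using b.toBasis.mem_span x

theorem inner_apply_self_le (hb : ∀ i, T (b i) = μ i • b i) {c : ℝ} (hc : ∀ i, μ i ≤ c)
    (x : E) : ⟪T x, x⟫ ≤ c * ‖x‖ ^ 2 :=
  inner_apply_self_le_of_mem_span hb (fun i _ => hc i) (b.mem_span_image_univ x)

theorem le_inner_apply_self (hb : ∀ i, T (b i) = μ i • b i) {c : ℝ} (hc : ∀ i, c ≤ μ i)
    (x : E) : c * ‖x‖ ^ 2 ≤ ⟪T x, x⟫ :=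
  le_inner_apply_self_of_mem_span hb (fun i _ => hc i) (b.mem_span_image_univ x)

theorem exists_ne_zero_mem_of_finrank_lt [FiniteDimensional ℝ E] {V W : Submodule ℝ E}
    (h : finrank ℝ E < finrank ℝ V + finrank ℝ W) : ∃ x ≠ 0, x ∈ V ∧ x ∈ W := by
  by_contra! hVW
  exact h.not_ge (Submodule.finrank_add_finrank_le_of_disjoint
    (Submodule.disjoint_def.mpr fun x hV hW => by_contra fun hx => hVW x hx hV hW))

/-- The Courant–Fischer argument: a nonzero `x` in the span of the eigenvectors of `T` from
index `k` on and of those of `S` up to index `k` gives `s λₖ(T) ‖x‖² ≤ t λₖ(S) ‖x‖²`. -/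
theorem mul_eigenvalue_le_mul_eigenvalue {S : E →ₗ[ℝ] E} {c : OrthonormalBasis (Fin n) ℝ E}
    {ν : Fin n → ℝ} (hb : ∀ i, T (b i) = μ i • b i) (hμ : Monotone μ)
    (hc : ∀ i, S (c i) = ν i • c i) (hν : Monotone ν) {s t : ℝ} (hs : 0 ≤ s) (ht : 0 ≤ t)
    (h : ∀ x, s * ⟪T x, x⟫ ≤ t * ⟪S x, x⟫) (k : Fin n) : s * μ k ≤ t * ν k := by
  have := Module.Finite.of_basis b.toBasis
  obtain ⟨x, hx0, hxb, hxc⟩ := exists_ne_zero_mem_of_finrank_lt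
    (V := Submodule.span ℝ (b '' Finset.Ici k)) (W := Submodule.span ℝ (c '' Finset.Iic k)) (by
      rw [b.finrank_span_image, c.finrank_span_image, Fin.card_Ici, Fin.card_Iic,
        finrank_eq_card_basis b.toBasis, Fintype.card_fin]
      omega)
  have hT : μ k * ‖x‖ ^ 2 ≤ ⟪T x, x⟫ :=
    le_inner_apply_self_of_mem_span hb (fun i hi => hμ (Finset.mem_Ici.mp hi)) hxb
  have hS : ⟪S x, x⟫ ≤ ν k * ‖x‖ ^ 2 :=
    inner_apply_self_le_of_mem_span hc (fun i hi => hν (Finset.mem_Iic.mp hi)) hxc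
  refine le_of_mul_le_mul_right ?_ (by positivity : 0 < ‖x‖ ^ 2)
  calc s * μ k * ‖x‖ ^ 2 = s * (μ k * ‖x‖ ^ 2) := mul_assoc _ _ _
    _ ≤ s * ⟪T x, x⟫ := mul_le_mul_of_nonneg_left hT hs
    _ ≤ t * ⟪S x, x⟫ := h x
    _ ≤ t * (ν k * ‖x‖ ^ 2) := mul_le_mul_of_nonneg_left hS ht
    _ = t * ν k * ‖x‖ ^ 2 := (mul_assoc _ _ _).symm

theorem eq_of_monotone_eigenbasis {c : OrthonormalBasis (Fin n) ℝ E} {ν : Fin n → ℝ}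
    (hb : ∀ i, T (b i) = μ i • b i) (hμ : Monotone μ) (hc : ∀ i, T (c i) = ν i • c i)
    (hν : Monotone ν) : μ = ν := by
  funext k
  have h x : 1 * ⟪T x, x⟫ ≤ 1 * ⟪T x, x⟫ := le_rfl
  simpa using le_antisymm
    (mul_eigenvalue_le_mul_eigenvalue hb hμ hc hν zero_le_one zero_le_one h k)
    (mul_eigenvalue_le_mul_eigenvalue hc hν hb hμ zero_le_one zero_le_one h k)

end MinMax

namespace Matrix

namespace IsHermitian

variable {n : ℕ} {M : Matrix (Fin n) (Fin n) ℝ}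

noncomputable def sortedEigenvalues (hM : M.IsHermitian) : Fin n → ℝ :=
  hM.eigenvalues ∘ Tuple.sort hM.eigenvalues

noncomputable def sortedEigenvectorBasis (hM : M.IsHermitian) :
    OrthonormalBasis (Fin n) ℝ (EuclideanSpace ℝ (Fin n)) :=
  hM.eigenvectorBasis.reindex (Tuple.sort hM.eigenvalues).symm

theorem monotone_sortedEigenvalues (hM : M.IsHermitian) : Monotone hM.sortedEigenvalues :=
  Tuple.monotone_sort _

theorem toEuclideanLin_sortedEigenvectorBasis (hM : M.IsHermitian) (i : Fin n) :
    toEuclideanLin M (hM.sortedEigenvectorBasis i) =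
      hM.sortedEigenvalues i • hM.sortedEigenvectorBasis i := by
  simp only [sortedEigenvectorBasis, OrthonormalBasis.reindex_apply, Equiv.symm_symm]
  rw [toLpLin_apply, hM.mulVec_eigenvectorBasis]
  rfl

theorem sortedEigenvalues_congr {N : Matrix (Fin n) (Fin n) ℝ} (hM : M.IsHermitian)
    (hN : N.IsHermitian) (h : M = N) : hM.sortedEigenvalues = hN.sortedEigenvalues := by
  subst h; rfl

theorem card_sortedEigenvalues_ne_zero (hM : M.IsHermitian) :
    (Finset.univ.filter fun i => hM.sortedEigenvalues i ≠ 0).card = M.rank := by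
  rw [hM.rank_eq_card_non_zero_eigs, ← Fintype.card_subtype]
  exact Fintype.card_congr (Equiv.subtypeEquiv (Tuple.sort hM.eigenvalues) fun _ => Iff.rfl)

theorem coe_ofFn_sortedEigenvalues (hM : M.IsHermitian) :
    (List.ofFn hM.sortedEigenvalues : Multiset ℝ) = M.charpoly.roots := by
  rw [hM.roots_charpoly_eq_eigenvalues, Fin.univ_val_map, Multiset.coe_eq_coe]
  exact Equiv.Perm.ofFn_comp_perm _ _

end IsHermitian

theorem PosSemidef.sortedEigenvalues_nonneg {n : ℕ} {M : Matrix (Fin n) (Fin n) ℝ}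
    (hM : M.PosSemidef) (i : Fin n) : 0 ≤ hM.1.sortedEigenvalues i :=
  hM.eigenvalues_nonneg _

theorem PosSemidef.sortedEigenvalues_mul_self {n : ℕ} {M : Matrix (Fin n) (Fin n) ℝ}
    (hM : M.PosSemidef) (hMM : (M * M).IsHermitian) :
    hMM.sortedEigenvalues = fun i => hM.1.sortedEigenvalues i ^ 2 := by
  refine eq_of_monotone_eigenbasis hMM.toEuclideanLin_sortedEigenvectorBasis
    hMM.monotone_sortedEigenvalues (c := hM.1.sortedEigenvectorBasis) (fun i => ?_)
    fun i j hij => pow_le_pow_left₀ (hM.sortedEigenvalues_nonneg i)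
      (hM.1.monotone_sortedEigenvalues hij) 2
  rw [toLpLin_mul_same, LinearMap.comp_apply, hM.1.toEuclideanLin_sortedEigenvectorBasis,
    map_smul, hM.1.toEuclideanLin_sortedEigenvectorBasis, smul_smul, sq]

theorem inner_toEuclideanLin_conjTranspose_mul_self {m n : ℕ}
    (C : Matrix (Fin m) (Fin n) ℝ) (x : EuclideanSpace ℝ (Fin n)) :
    ⟪toEuclideanLin (Cᴴ * C) x, x⟫ = ‖toEuclideanLin C x‖ ^ 2 := by
  rw [toLpLin_mul_same, toEuclideanLin_conjTranspose_eq_adjoint, LinearMap.comp_apply,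
    LinearMap.adjoint_inner_left, real_inner_self_eq_norm_sq]

theorem inner_toEuclideanLin_conjTranspose_mul_self_mul {a r b : ℕ}
    (A : Matrix (Fin a) (Fin r) ℝ) (B : Matrix (Fin r) (Fin b) ℝ) (x : EuclideanSpace ℝ (Fin b)) :
    ⟪toEuclideanLin ((A * B)ᴴ * (A * B)) x, x⟫ =
      ⟪toEuclideanLin (Aᴴ * A) (toEuclideanLin B x), toEuclideanLin B x⟫ := by
  rw [inner_toEuclideanLin_conjTranspose_mul_self, inner_toEuclideanLin_conjTranspose_mul_self,
    toLpLin_mul_same, LinearMap.comp_apply]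

theorem roots_charpoly_conjTranspose_mul_self {p q : ℕ} (C : Matrix (Fin p) (Fin q) ℝ)
    (hpq : p ≤ q) :
    (Cᴴ * C).charpoly.roots = Multiset.replicate (q - p) 0 + (C * Cᴴ).charpoly.roots := by
  have h := congrArg Polynomial.roots (charpoly_mul_comm' Cᴴ C)
  simp only [Fintype.card_fin] at h
  rw [roots_mul ((monic_X_pow p).mul (charpoly_monic _)).ne_zero,
    roots_mul ((monic_X_pow q).mul (charpoly_monic _)).ne_zero, roots_X_pow,
    roots_X_pow, Multiset.nsmul_singleton, Multiset.nsmul_singleton,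
    show Multiset.replicate q (0 : ℝ) = Multiset.replicate p 0 + Multiset.replicate (q - p) 0
      by rw [← Multiset.replicate_add, Nat.add_sub_cancel' hpq], add_assoc] at h
  exact add_left_cancel h

theorem sortedEigenvalues_conjTranspose_mul_self_eq {p q : ℕ} (C : Matrix (Fin p) (Fin q) ℝ)
    (hpq : p ≤ q) (k : Fin p) :
    (isHermitian_conjTranspose_mul_self C).sortedEigenvalues ⟨q - p + k, by omega⟩ =
      (isHermitian_mul_conjTranspose_self C).sortedEigenvalues k := by
  set hP := isHermitian_conjTranspose_mul_self C
  set hG := isHermitian_mul_conjTranspose_self C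
  have hlist : List.ofFn hP.sortedEigenvalues =
      List.replicate (q - p) 0 ++ List.ofFn hG.sortedEigenvalues := by
    refine List.Perm.eq_of_sortedLE ?_ ?_ ?_
    · simpa using hP.monotone_sortedEigenvalues
    · rw [List.sortedLE_iff_pairwise, List.pairwise_append]
      refine ⟨(List.sortedLE_replicate _).pairwise,
        (List.sortedLE_ofFn_iff.mpr hG.monotone_sortedEigenvalues).pairwise, ?_⟩
      intro a ha b hb
      obtain ⟨i, rfl⟩ := List.mem_ofFn.mp hb
      rw [List.eq_of_mem_replicate ha]
      exact (posSemidef_self_mul_conjTranspose C).sortedEigenvalues_nonneg i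
    · rw [← Multiset.coe_eq_coe, ← Multiset.coe_add, hP.coe_ofFn_sortedEigenvalues,
        hG.coe_ofFn_sortedEigenvalues, roots_charpoly_conjTranspose_mul_self C hpq]
      rfl
  have := List.getElem_of_eq hlist (i := q - p + k) (by simp; omega)
  simp [List.getElem_append_right] at this
  exact this

end Matrix

section SingularValues

variable {a r b m n : ℕ}

theorem sv_eq_sqrt_sortedEigenvalues (M : Matrix (Fin m) (Fin n) ℝ) (i : Fin n) :
    sv M i = √((isHermitian_conjTranspose_mul_self M).sortedEigenvalues i.rev) :=
  rfl

theorem sv_eq_of_conjTranspose_mul_self_eq {m' : ℕ} {M : Matrix (Fin m) (Fin n) ℝ}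
    {N : Matrix (Fin m') (Fin n) ℝ} (h : Mᴴ * M = Nᴴ * N) : sv M = sv N := by
  funext i
  rw [sv_eq_sqrt_sortedEigenvalues, sv_eq_sqrt_sortedEigenvalues,
    IsHermitian.sortedEigenvalues_congr _ _ h]

theorem sv_pos_of_lt_rank (M : Matrix (Fin m) (Fin n) ℝ) (k : Fin n) (hk : (k : ℕ) < M.rank) :
    0 < sv M k := by
  set hP := isHermitian_conjTranspose_mul_self M
  refine Real.sqrt_pos.mpr (lt_of_not_ge fun hle => hk.not_ge ?_)
  have hsub : Finset.univ.filter (fun i => hP.sortedEigenvalues i ≠ 0) ⊆ Finset.Ioi k.rev := by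
    intro i hi
    rw [Finset.mem_filter] at hi
    rw [Finset.mem_Ioi]
    by_contra! hik
    exact hi.2 (le_antisymm ((hP.monotone_sortedEigenvalues hik).trans hle)
      ((posSemidef_conjTranspose_mul_self M).sortedEigenvalues_nonneg i))
  calc M.rank = (Mᴴ * M).rank := (rank_conjTranspose_mul_self M).symm
    _ = _ := hP.card_sortedEigenvalues_ne_zero.symm
    _ ≤ (Finset.Ioi k.rev).card := Finset.card_le_card hsub
    _ = k := by rw [Fin.card_Ioi, Fin.val_rev]; omega

theorem sv_mul_le (A : Matrix (Fin a) (Fin r) ℝ) (B : Matrix (Fin r) (Fin b) ℝ) (hr : 0 < r)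
    (k : Fin b) : sv (A * B) k ≤ sv A ⟨0, hr⟩ * sv B k := by
  set hA := isHermitian_conjTranspose_mul_self A
  have hA0 := (posSemidef_conjTranspose_mul_self A).sortedEigenvalues_nonneg
  have hq x : 1 * ⟪toEuclideanLin ((A * B)ᴴ * (A * B)) x, x⟫ ≤
      hA.sortedEigenvalues (⟨0, hr⟩ : Fin r).rev * ⟪toEuclideanLin (Bᴴ * B) x, x⟫ := by
    rw [one_mul, inner_toEuclideanLin_conjTranspose_mul_self_mul,
      inner_toEuclideanLin_conjTranspose_mul_self B]
    refine inner_apply_self_le hA.toEuclideanLin_sortedEigenvectorBasis (fun i => ?_) _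
    exact hA.monotone_sortedEigenvalues (by simp only [Fin.le_def, Fin.val_rev]; omega)
  have h := mul_eigenvalue_le_mul_eigenvalue
    (isHermitian_conjTranspose_mul_self _).toEuclideanLin_sortedEigenvectorBasis
    (isHermitian_conjTranspose_mul_self _).monotone_sortedEigenvalues
    (isHermitian_conjTranspose_mul_self B).toEuclideanLin_sortedEigenvectorBasis
    (isHermitian_conjTranspose_mul_self B).monotone_sortedEigenvalues zero_le_one (hA0 _) hq k.rev
  rw [sv_eq_sqrt_sortedEigenvalues, sv_eq_sqrt_sortedEigenvalues, sv_eq_sqrt_sortedEigenvalues,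
    ← Real.sqrt_mul (hA0 _)]
  exact Real.sqrt_le_sqrt (by simpa using h)

theorem sv_mul_sv_le (A : Matrix (Fin a) (Fin r) ℝ) (B : Matrix (Fin r) (Fin b) ℝ) (hr : 0 < r)
    (k : Fin b) : sv A ⟨r - 1, Nat.sub_lt hr one_pos⟩ * sv B k ≤ sv (A * B) k := by
  set hA := isHermitian_conjTranspose_mul_self A
  have hA0 := (posSemidef_conjTranspose_mul_self A).sortedEigenvalues_nonneg
  have hq x : hA.sortedEigenvalues (⟨r - 1, Nat.sub_lt hr one_pos⟩ : Fin r).rev *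
      ⟪toEuclideanLin (Bᴴ * B) x, x⟫ ≤ 1 * ⟪toEuclideanLin ((A * B)ᴴ * (A * B)) x, x⟫ := by
    rw [one_mul, inner_toEuclideanLin_conjTranspose_mul_self_mul,
      inner_toEuclideanLin_conjTranspose_mul_self B]
    refine le_inner_apply_self hA.toEuclideanLin_sortedEigenvectorBasis (fun i => ?_) _
    exact hA.monotone_sortedEigenvalues (by simp only [Fin.le_def, Fin.val_rev]; omega)
  have h := mul_eigenvalue_le_mul_eigenvalue
    (isHermitian_conjTranspose_mul_self B).toEuclideanLin_sortedEigenvectorBasis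
    (isHermitian_conjTranspose_mul_self B).monotone_sortedEigenvalues
    (isHermitian_conjTranspose_mul_self _).toEuclideanLin_sortedEigenvectorBasis
    (isHermitian_conjTranspose_mul_self _).monotone_sortedEigenvalues (hA0 _) zero_le_one hq k.rev
  rw [sv_eq_sqrt_sortedEigenvalues, sv_eq_sqrt_sortedEigenvalues, sv_eq_sqrt_sortedEigenvalues,
    ← Real.sqrt_mul (hA0 _)]
  exact Real.sqrt_le_sqrt (by simpa using h)

theorem sv_transpose {p q : ℕ} (C : Matrix (Fin p) (Fin q) ℝ) (k : ℕ) (hp : k < p) (hq : k < q) :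
    sv Cᵀ ⟨k, hp⟩ = sv C ⟨k, hq⟩ := by
  wlog hpq : p ≤ q generalizing p q
  · simpa using (this Cᵀ hq hp (by omega)).symm
  have hCT : (Cᵀ)ᴴ * Cᵀ = C * Cᴴ := by simp [conjTranspose_eq_transpose_of_trivial]
  rw [sv_eq_sqrt_sortedEigenvalues, sv_eq_sqrt_sortedEigenvalues,
    IsHermitian.sortedEigenvalues_congr _ (isHermitian_mul_conjTranspose_self C) hCT,
    ← sortedEigenvalues_conjTranspose_mul_self_eq C hpq]
  congr 2
  ext
  simp only [Fin.val_rev]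
  omega

theorem sv_mul_of_transpose_mul_self_eq (A : Matrix (Fin a) (Fin r) ℝ)
    (B : Matrix (Fin r) (Fin b) ℝ) (h : Aᵀ * A = B * Bᵀ) (k : Fin b) :
    sv (A * B) k = sv B k ^ 2 := by
  have hP := posSemidef_conjTranspose_mul_self B
  have hZ : (A * B)ᴴ * (A * B) = (Bᴴ * B) * (Bᴴ * B) := by
    simp only [conjTranspose_eq_transpose_of_trivial, transpose_mul, Matrix.mul_assoc]
    rw [← Matrix.mul_assoc Aᵀ, h, Matrix.mul_assoc]
  rw [sv_eq_sqrt_sortedEigenvalues, sv_eq_sqrt_sortedEigenvalues,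
    IsHermitian.sortedEigenvalues_congr _ (hZ ▸ isHermitian_conjTranspose_mul_self _) hZ,
    hP.sortedEigenvalues_mul_self, Real.sqrt_sq (hP.sortedEigenvalues_nonneg _),
    Real.sq_sqrt (hP.sortedEigenvalues_nonneg _)]

end SingularValues

theorem two_mul_div_le_sq_add_sq_div_min {s t u v x y : ℝ} (hs : 0 ≤ s) (hx : 0 < x)
    (hy : 0 < y) (hsuv : s ≤ u * v) (hxyt : x * y ≤ t) :
    2 * s / t ≤ (u ^ 2 + v ^ 2) / min (x ^ 2) (y ^ 2) := by
  have hm : 0 < min (x ^ 2) (y ^ 2) := lt_min (by positivity) (by positivity)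
  have hmxy : min (x ^ 2) (y ^ 2) ≤ x * y := by
    rcases le_total x y with hxy | hxy
    · exact (min_le_left _ _).trans (by nlinarith)
    · exact (min_le_right _ _).trans (by nlinarith)
  calc 2 * s / t ≤ 2 * s / min (x ^ 2) (y ^ 2) :=
        div_le_div_of_nonneg_left (by positivity) hm (hmxy.trans hxyt)
    _ ≤ (u ^ 2 + v ^ 2) / min (x ^ 2) (y ^ 2) :=
        div_le_div_of_nonneg_right (by nlinarith [sq_nonneg (u - v)]) hm.le

theorem stmt8_general {a b r : ℕ} (hr : 0 < r) (hrb : r ≤ b)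
    (Z : Matrix (Fin a) (Fin b) ℝ) (hZ : Z.rank = r) :
    (∀ (A : Matrix (Fin a) (Fin r) ℝ) (B : Matrix (Fin r) (Fin b) ℝ), A * B = Z →
      2 * sv Z ⟨0, lt_of_lt_of_le hr hrb⟩ /
          sv Z ⟨r - 1, lt_of_lt_of_le (Nat.sub_lt hr one_pos) hrb⟩
        ≤ (sv A ⟨0, hr⟩ ^ 2 + sv B ⟨0, lt_of_lt_of_le hr hrb⟩ ^ 2) /
            min (sv A ⟨r - 1, Nat.sub_lt hr one_pos⟩ ^ 2)
              (sv B ⟨r - 1, lt_of_lt_of_le (Nat.sub_lt hr one_pos) hrb⟩ ^ 2)) ∧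
    (∀ (A : Matrix (Fin a) (Fin r) ℝ) (B : Matrix (Fin r) (Fin b) ℝ), A * B = Z →
      Aᵀ * A = B * Bᵀ →
      (sv A ⟨0, hr⟩ ^ 2 + sv B ⟨0, lt_of_lt_of_le hr hrb⟩ ^ 2) /
          min (sv A ⟨r - 1, Nat.sub_lt hr one_pos⟩ ^ 2)
            (sv B ⟨r - 1, lt_of_lt_of_le (Nat.sub_lt hr one_pos) hrb⟩ ^ 2)
        = 2 * sv Z ⟨0, lt_of_lt_of_le hr hrb⟩ /
            sv Z ⟨r - 1, lt_of_lt_of_le (Nat.sub_lt hr one_pos) hrb⟩) := by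
  constructor
  · rintro A B rfl
    have hA := rank_mul_le_left A B
    have hB := rank_mul_le_right A B
    exact two_mul_div_le_sq_add_sq_div_min (Real.sqrt_nonneg _)
      (sv_pos_of_lt_rank A _ (by simp only; omega)) (sv_pos_of_lt_rank B _ (by simp only; omega))
      (sv_mul_le A B hr _) (sv_mul_sv_le A B hr _)
  · rintro A B rfl hbal
    have hAB : Aᴴ * A = (Bᵀ)ᴴ * Bᵀ := by simpa [conjTranspose_eq_transpose_of_trivial] using hbal
    rw [sv_eq_of_conjTranspose_mul_self_eq hAB, sv_transpose B 0 hr (by omega),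
      sv_transpose B (r - 1) (by omega) (by omega),
      sv_mul_of_transpose_mul_self_eq A B hbal, sv_mul_of_transpose_mul_self_eq A B hbal, min_self]
    ring

/-- Among all factorizations `Z = AB` of a rank-`r` matrix `Z`, the quantity
`(σ_1(A)² + σ_1(B)²)/min(σ_r(A)², σ_r(B)²)` is at least `2σ_1(Z)/σ_r(Z)`, and this
minimum value is attained by every balanced factorization (`AᵀA = BBᵀ`). -/
theorem stmt8 {a b r : ℕ} (hr : 0 < r) (hra : r ≤ a) (hrb : r ≤ b)
    (Z : Matrix (Fin a) (Fin b) ℝ) (hZ : Z.rank = r) :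
    (∀ (A : Matrix (Fin a) (Fin r) ℝ) (B : Matrix (Fin r) (Fin b) ℝ), A * B = Z →
      2 * sv Z ⟨0, lt_of_lt_of_le hr hrb⟩ /
          sv Z ⟨r - 1, lt_of_lt_of_le (Nat.sub_lt hr one_pos) hrb⟩
        ≤ (sv A ⟨0, hr⟩ ^ 2 + sv B ⟨0, lt_of_lt_of_le hr hrb⟩ ^ 2) /
            min (sv A ⟨r - 1, Nat.sub_lt hr one_pos⟩ ^ 2)
              (sv B ⟨r - 1, lt_of_lt_of_le (Nat.sub_lt hr one_pos) hrb⟩ ^ 2)) ∧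
    (∀ (A : Matrix (Fin a) (Fin r) ℝ) (B : Matrix (Fin r) (Fin b) ℝ), A * B = Z →
      Aᵀ * A = B * Bᵀ →
      (sv A ⟨0, hr⟩ ^ 2 + sv B ⟨0, lt_of_lt_of_le hr hrb⟩ ^ 2) /
          min (sv A ⟨r - 1, Nat.sub_lt hr one_pos⟩ ^ 2)
            (sv B ⟨r - 1, lt_of_lt_of_le (Nat.sub_lt hr one_pos) hrb⟩ ^ 2)
        = 2 * sv Z ⟨0, lt_of_lt_of_le hr hrb⟩ /
            sv Z ⟨r - 1, lt_of_lt_of_le (Nat.sub_lt hr one_pos) hrb⟩) :=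
  stmt8_general hr hrb Z hZ
end

section
/- Let (A,B) be a global minimizer of f(A,B) = (1/2)‖Z − AB‖_F² with rk(Z) ≥ r, so that AB is the best rank-r approximation of Z. Then the largest eigenvalue of the Hessian of f at (A,B) equals σ_1(A)² + σ_1(B)². -/
/-!
Write `E = AB - Z`. On a direction `(X, Y)` the Hessian has the quadratic form
`Q(X, Y) = ‖AY + XB‖² + 2⟪E, XY⟫`, and global minimality gives the first-order conditions
`EBᵀ = 0`, `AᵀE = 0` together with `Q ≥ 0`. With `μ_A = σ₁(A)²`, `μ_B = σ₁(B)²`, adding the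
nonnegative value `Q(-μ_A X, μ_B Y)` to `μ_A μ_B Q(X, Y)` cancels the residual term and leaves
`(μ_A + μ_B)(μ_B ‖AY‖² + μ_A ‖XB‖²) ≤ μ_A μ_B (μ_A + μ_B)(‖X‖² + ‖Y‖²)`, which bounds every
eigenvalue by `μ_A + μ_B`. Conversely, for top right singular vectors `v_A`, `v_B` of `A` and `B`
the direction `((A v_A)(B v_B)ᵀ, μ_A v_A v_Bᵀ)` is an eigenvector for `μ_A + μ_B`, the residual
terms vanishing by the first-order conditions. Both `μ_A` and `μ_B` are positive because a
minimizer has `AB ≠ 0` as soon as `Z ≠ 0`.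
-/

open Matrix Kronecker

open Matrix

/-- The commutation matrix `K_{k,ℓ}` satisfying `vec(Xᵀ) = K_{k,ℓ} vec(X)` for
`X ∈ ℝ^{k×ℓ}`, in index form. -/
def commM (k l : ℕ) : Matrix (Fin k × Fin l) (Fin l × Fin k) ℝ :=
  Matrix.of fun p q => if p.1 = q.2 ∧ p.2 = q.1 then 1 else 0

open Filter Topology

lemma coeffs_of_forall_quartic_nonneg {c₁ c₂ c₃ c₄ : ℝ}
    (h : ∀ t : ℝ, 0 ≤ c₁ * t + c₂ * t ^ 2 + c₃ * t ^ 3 + c₄ * t ^ 4) : c₁ = 0 ∧ 0 ≤ c₂ := by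
  have hc₁ : c₁ = 0 := by
    have hmin : IsLocalMin (fun t : ℝ => c₁ * t + c₂ * t ^ 2 + c₃ * t ^ 3 + c₄ * t ^ 4) 0 :=
      Eventually.of_forall fun t => by simpa using h t
    have hderiv := ((((hasDerivAt_id (0 : ℝ)).const_mul c₁).add
      ((hasDerivAt_pow 2 (0 : ℝ)).const_mul c₂)).add
      ((hasDerivAt_pow 3 (0 : ℝ)).const_mul c₃)).add ((hasDerivAt_pow 4 (0 : ℝ)).const_mul c₄)
    simp only [id_eq, mul_one, Nat.cast_ofNat, Nat.add_one_sub_one, pow_one, mul_zero, add_zero,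
      ne_eq, OfNat.ofNat_ne_zero, not_false_eq_true, zero_pow] at hderiv
    exact hmin.hasDerivAt_eq_zero hderiv
  refine ⟨hc₁, ?_⟩
  -- away from `0` the quadratic `c₂ + c₃ t + c₄ t²` is the quartic divided by `t²`
  have hlim : Tendsto (fun t : ℝ => c₂ + c₃ * t + c₄ * t ^ 2) (𝓝[≠] 0) (𝓝 c₂) :=
    tendsto_nhdsWithin_of_tendsto_nhds <|
      (by fun_prop : Continuous fun t : ℝ => c₂ + c₃ * t + c₄ * t ^ 2).tendsto' 0 c₂ (by simp)
  refine ge_of_tendsto hlim (eventually_nhdsWithin_of_forall fun t (ht : t ≠ 0) => ?_)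
  have ht2 : 0 < t ^ 2 := by positivity
  have := h t
  rw [hc₁] at this
  nlinarith

namespace Matrix

section Spectral

variable {m n : Type*} [Fintype m] [Fintype n]

lemma dotProduct_mulVec_le_of_eigenvalues_le [DecidableEq n] {M : Matrix n n ℝ}
    (hM : M.IsHermitian) {μ : ℝ} (h : ∀ i, hM.eigenvalues i ≤ μ) (x : n → ℝ) :
    x ⬝ᵥ M *ᵥ x ≤ μ * (x ⬝ᵥ x) := by
  open scoped MatrixOrder in
  have hle : M ≤ algebraMap ℝ _ μ := le_algebraMap_of_spectrum_le (ha := hM) <| by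
    rw [hM.spectrum_real_eq_range_eigenvalues]
    rintro _ ⟨i, rfl⟩
    exact h i
  simpa [Algebra.algebraMap_eq_smul_one, sub_mulVec, dotProduct_sub, smul_mulVec] using
    (le_iff.mp hle).dotProduct_mulVec_nonneg x

lemma mulVec_dotProduct_mulVec (M : Matrix m n ℝ) (u : n → ℝ) :
    (M *ᵥ u) ⬝ᵥ (M *ᵥ u) = u ⬝ᵥ (Mᵀ * M) *ᵥ u := by
  rw [dotProduct_mulVec, ← mulVec_mulVec, mulVec_transpose, dotProduct_comm]

lemma le_of_mulVec_eq_smul {M : Matrix n n ℝ} {v : n → ℝ} {c μ : ℝ} (hv : v ≠ 0)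
    (hMv : M *ᵥ v = c • v) (h : v ⬝ᵥ M *ᵥ v ≤ μ * (v ⬝ᵥ v)) : c ≤ μ := by
  rw [hMv, dotProduct_smul, smul_eq_mul] at h
  have hpos : 0 < v ⬝ᵥ v := lt_of_le_of_ne (Fintype.sum_nonneg fun _ => mul_self_nonneg _)
    (Ne.symm (dotProduct_self_eq_zero.not.mpr hv))
  exact le_of_mul_le_mul_right h hpos

lemma pos_of_mulVec_dotProduct_le {M : Matrix m n ℝ} (hM : M ≠ 0) {μ : ℝ}
    (h : ∀ u, (M *ᵥ u) ⬝ᵥ (M *ᵥ u) ≤ μ * (u ⬝ᵥ u)) : 0 < μ := by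
  classical
  by_contra! hμ
  refine hM (ext_of_mulVec_single fun j => ?_)
  rw [zero_mulVec, ← dotProduct_self_eq_zero]
  refine le_antisymm ((h _).trans ?_) (Fintype.sum_nonneg fun _ => mul_self_nonneg _)
  exact mul_nonpos_of_nonpos_of_nonneg hμ (Fintype.sum_nonneg fun _ => mul_self_nonneg _)

lemma transpose_mulVec_dotProduct_le {B : Matrix m n ℝ} {μ : ℝ} (hμ : 0 ≤ μ)
    (hB : ∀ u, (B *ᵥ u) ⬝ᵥ (B *ᵥ u) ≤ μ * (u ⬝ᵥ u)) (w : m → ℝ) :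
    (Bᵀ *ᵥ w) ⬝ᵥ (Bᵀ *ᵥ w) ≤ μ * (w ⬝ᵥ w) := by
  set u := Bᵀ *ᵥ w
  -- Cauchy–Schwarz: `‖u‖⁴ = ⟪w, B u⟫² ≤ ‖w‖² ‖B u‖² ≤ μ ‖w‖² ‖u‖²`
  have hu : u ⬝ᵥ u = w ⬝ᵥ B *ᵥ u := by
    rw [dotProduct_mulVec, vecMul_transpose, dotProduct_comm]
  have hcs : (u ⬝ᵥ u) ^ 2 ≤ (μ * (w ⬝ᵥ w)) * (u ⬝ᵥ u) :=
    calc (u ⬝ᵥ u) ^ 2 = (w ⬝ᵥ B *ᵥ u) ^ 2 := by rw [hu]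
      _ ≤ (w ⬝ᵥ w) * ((B *ᵥ u) ⬝ᵥ (B *ᵥ u)) := by
        simpa [dotProduct, sq] using Finset.sum_mul_sq_le_sq_mul_sq Finset.univ w (B *ᵥ u)
      _ ≤ (w ⬝ᵥ w) * (μ * (u ⬝ᵥ u)) :=
        mul_le_mul_of_nonneg_left (hB u) (Fintype.sum_nonneg fun _ => mul_self_nonneg _)
      _ = (μ * (w ⬝ᵥ w)) * (u ⬝ᵥ u) := by ring
  have hu0 : 0 ≤ u ⬝ᵥ u := Fintype.sum_nonneg fun _ => mul_self_nonneg _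
  have hw0 : 0 ≤ μ * (w ⬝ᵥ w) := mul_nonneg hμ (Fintype.sum_nonneg fun _ => mul_self_nonneg _)
  nlinarith

end Spectral

section Frobenius

variable {m n p : Type*} [Fintype m] [Fintype n] [Fintype p]

lemma vec_dotProduct_vec_mul_transpose (X : Matrix m n ℝ) (N : Matrix m p ℝ)
    (P : Matrix n p ℝ) : vec X ⬝ᵥ vec (N * Pᵀ) = vec (X * P) ⬝ᵥ vec N := by
  simp only [vec_dotProduct_vec, transpose_mul]
  rw [← Matrix.mul_assoc, trace_mul_comm, Matrix.mul_assoc]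

lemma vec_dotProduct_vec_transpose_mul (Y : Matrix n p ℝ) (P : Matrix m n ℝ)
    (N : Matrix m p ℝ) : vec Y ⬝ᵥ vec (Pᵀ * N) = vec (P * Y) ⬝ᵥ vec N := by
  simp only [vec_dotProduct_vec, transpose_mul, Matrix.mul_assoc]

lemma vec_transpose_dotProduct_vec_transpose (M N : Matrix m n ℝ) :
    vec Mᵀ ⬝ᵥ vec Nᵀ = vec M ⬝ᵥ vec N := by
  simp only [vec_dotProduct_vec, transpose_transpose]
  rw [← trace_transpose, transpose_mul, transpose_transpose, trace_mul_comm]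

lemma vec_dotProduct_vec_eq_sum_col (M N : Matrix m n ℝ) :
    vec M ⬝ᵥ vec N = ∑ j, (fun i => M i j) ⬝ᵥ (fun i => N i j) := by
  simp only [dotProduct, Fintype.sum_prod_type, vec]

lemma vec_mul_dotProduct_le_of_left {A : Matrix m n ℝ} {μ : ℝ}
    (hA : ∀ u, (A *ᵥ u) ⬝ᵥ (A *ᵥ u) ≤ μ * (u ⬝ᵥ u)) (Y : Matrix n p ℝ) :
    vec (A * Y) ⬝ᵥ vec (A * Y) ≤ μ * (vec Y ⬝ᵥ vec Y) := by
  rw [vec_dotProduct_vec_eq_sum_col, vec_dotProduct_vec_eq_sum_col, Finset.mul_sum]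
  exact Finset.sum_le_sum fun j _ => hA fun k => Y k j

lemma vec_mul_dotProduct_le_of_right {B : Matrix n p ℝ} {μ : ℝ} (hμ : 0 ≤ μ)
    (hB : ∀ u, (B *ᵥ u) ⬝ᵥ (B *ᵥ u) ≤ μ * (u ⬝ᵥ u)) (X : Matrix m n ℝ) :
    vec (X * B) ⬝ᵥ vec (X * B) ≤ μ * (vec X ⬝ᵥ vec X) := by
  rw [← vec_transpose_dotProduct_vec_transpose, transpose_mul,
    ← vec_transpose_dotProduct_vec_transpose X]
  exact vec_mul_dotProduct_le_of_left (transpose_mulVec_dotProduct_le hμ hB) Xᵀ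

end Frobenius

end Matrix

lemma exists_eigenvector_sv_zero {m n : ℕ} (M : Matrix (Fin m) (Fin n) ℝ) (hn : 0 < n) :
    ∃ v : Fin n → ℝ, v ≠ 0 ∧ (Mᵀ * M) *ᵥ v = sv M ⟨0, hn⟩ ^ 2 • v ∧
      ∀ u, (M *ᵥ u) ⬝ᵥ (M *ᵥ u) ≤ sv M ⟨0, hn⟩ ^ 2 * (u ⬝ᵥ u) := by
  have hM := isHermitian_conjTranspose_mul_self M
  set j := Tuple.sort hM.eigenvalues (Fin.rev ⟨0, hn⟩)
  have hsv : sv M ⟨0, hn⟩ ^ 2 = hM.eigenvalues j :=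
    Real.sq_sqrt (eigenvalues_conjTranspose_mul_self_nonneg M j)
  have htop (i : Fin n) : hM.eigenvalues i ≤ hM.eigenvalues j := by
    have hi : (Tuple.sort hM.eigenvalues).symm i ≤ Fin.rev ⟨0, hn⟩ :=
      Fin.le_def.mpr (by rw [Fin.val_rev]; exact Nat.le_sub_one_of_lt (Fin.isLt _))
    simpa using Tuple.monotone_sort hM.eigenvalues hi
  refine ⟨hM.eigenvectorBasis j, fun h => hM.eigenvectorBasis.orthonormal.ne_zero j ?_, ?_, ?_⟩
  · ext i
    simpa using congrFun h i
  · rw [hsv, ← conjTranspose_eq_transpose_of_trivial]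
    exact hM.mulVec_eigenvectorBasis j
  · intro u
    rw [hsv, mulVec_dotProduct_mulVec, ← conjTranspose_eq_transpose_of_trivial]
    exact dotProduct_mulVec_le_of_eigenvalues_le hM htop u

section Hessian

variable {m k n : Type*} [Fintype m] [Fintype k] [Fintype n]

/-- The Hessian quadratic form `‖AY + XB‖² + 2⟪E, XY⟫` of `(A, B) ↦ ½‖AB - Z‖²` in the direction
`(X, Y)`, where `E = AB - Z`. -/
def hessianForm (A : Matrix m k ℝ) (B : Matrix k n ℝ) (E : Matrix m n ℝ) (X : Matrix m k ℝ)
    (Y : Matrix k n ℝ) : ℝ :=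
  vec (A * Y + X * B) ⬝ᵥ vec (A * Y + X * B) + 2 * (vec E ⬝ᵥ vec (X * Y))

lemma hessianForm_le {A : Matrix m k ℝ} {B : Matrix k n ℝ} {E : Matrix m n ℝ} {μA μB : ℝ}
    (hμA : 0 < μA) (hμB : 0 < μB) (hQ : ∀ X Y, 0 ≤ hessianForm A B E X Y)
    (hA : ∀ Y : Matrix k n ℝ, vec (A * Y) ⬝ᵥ vec (A * Y) ≤ μA * (vec Y ⬝ᵥ vec Y))
    (hB : ∀ X : Matrix m k ℝ, vec (X * B) ⬝ᵥ vec (X * B) ≤ μB * (vec X ⬝ᵥ vec X))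
    (X : Matrix m k ℝ) (Y : Matrix k n ℝ) :
    hessianForm A B E X Y ≤ (μA + μB) * (vec X ⬝ᵥ vec X + vec Y ⬝ᵥ vec Y) := by
  have hsum : μA * μB * hessianForm A B E X Y + hessianForm A B E (-μA • X) (μB • Y) =
      (μA + μB) * (μB * (vec (A * Y) ⬝ᵥ vec (A * Y)) + μA * (vec (X * B) ⬝ᵥ vec (X * B))) := by
    simp only [hessianForm, Matrix.mul_smul, Matrix.smul_mul, vec_add, vec_smul, dotProduct_add,
      add_dotProduct, dotProduct_smul, smul_dotProduct, smul_eq_mul,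
      dotProduct_comm (vec (X * B)) (vec (A * Y))]
    ring
  refine le_of_mul_le_mul_left ?_ (mul_pos hμA hμB)
  calc μA * μB * hessianForm A B E X Y
      ≤ (μA + μB) * (μB * (vec (A * Y) ⬝ᵥ vec (A * Y)) + μA * (vec (X * B) ⬝ᵥ vec (X * B))) := by
        linarith [hQ (-μA • X) (μB • Y)]
    _ ≤ (μA + μB) * (μB * (μA * (vec Y ⬝ᵥ vec Y)) + μA * (μB * (vec X ⬝ᵥ vec X))) := by
        gcongr
        · exact hA Y
        · exact hB X
    _ = μA * μB * ((μA + μB) * (vec X ⬝ᵥ vec X + vec Y ⬝ᵥ vec Y)) := by ring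

lemma hessian_eigenpair {A : Matrix m k ℝ} {B : Matrix k n ℝ} {E : Matrix m n ℝ}
    (hEB : E * Bᵀ = 0) (hAE : Aᵀ * E = 0) {μA μB : ℝ} {vA : k → ℝ} {vB : n → ℝ}
    (hvA : (Aᵀ * A) *ᵥ vA = μA • vA) (hvB : (Bᵀ * B) *ᵥ vB = μB • vB) (hμB : μB ≠ 0) :
    vecMulVec (A *ᵥ vA) (B *ᵥ vB) * (B * Bᵀ) + A * (μA • vecMulVec vA vB) * Bᵀ
        + E * (μA • vecMulVec vA vB)ᵀ = (μA + μB) • vecMulVec (A *ᵥ vA) (B *ᵥ vB) ∧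
      Aᵀ * A * (μA • vecMulVec vA vB) + Aᵀ * vecMulVec (A *ᵥ vA) (B *ᵥ vB) * B
        + (vecMulVec (A *ᵥ vA) (B *ᵥ vB))ᵀ * E = (μA + μB) • (μA • vecMulVec vA vB) := by
  -- `vB` lies in the row space of `B`, which `E` annihilates
  have hEvB : E *ᵥ vB = 0 := by
    have : vB = μB⁻¹ • (Bᵀ *ᵥ (B *ᵥ vB)) := by
      rw [mulVec_mulVec, hvB, smul_smul, inv_mul_cancel₀ hμB, one_smul]
    rw [this, mulVec_smul, mulVec_mulVec, hEB, zero_mulVec, smul_zero]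
  have hXE : vecMulVec (B *ᵥ vB) ((A *ᵥ vA) ᵥ* E) = 0 := by
    rw [← vecMul_transpose A, vecMul_vecMul, hAE, vecMul_zero]
    exact ext fun _ _ => mul_zero _
  have hAA : Aᵀ *ᵥ (A *ᵥ vA) = μA • vA := by rw [mulVec_mulVec, hvA]
  have hBB : Bᵀ *ᵥ (B *ᵥ vB) = μB • vB := by rw [mulVec_mulVec, hvB]
  simp only [transpose_smul, transpose_vecMulVec, Matrix.mul_smul, Matrix.smul_mul, mul_vecMulVec,
    vecMulVec_mul, ← vecMul_vecMul, vecMul_transpose, hXE, ← mulVec_mulVec]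
  simp only [← mulVec_transpose, hEvB, hAA, hBB, mulVec_smul, zero_vecMulVec, smul_zero, add_zero,
    smul_vecMulVec, vecMulVec_smul]
  constructor <;> module

end Hessian

section Minimizer

variable {m k n : Type*} [Fintype m] [Fintype k] [Fintype n]
  {Z : Matrix m n ℝ} {A : Matrix m k ℝ} {B : Matrix k n ℝ}

lemma residual_orthogonal_and_hessianForm_nonneg
    (hmin : ∀ (A' : Matrix m k ℝ) (B' : Matrix k n ℝ),
      vec (A * B - Z) ⬝ᵥ vec (A * B - Z) ≤ vec (A' * B' - Z) ⬝ᵥ vec (A' * B' - Z))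
    (X : Matrix m k ℝ) (Y : Matrix k n ℝ) :
    vec (A * B - Z) ⬝ᵥ vec (A * Y + X * B) = 0 ∧ 0 ≤ hessianForm A B (A * B - Z) X Y := by
  set E := A * B - Z
  set P := A * Y + X * B
  set R := X * Y
  have hexp (t : ℝ) : (A + t • X) * (B + t • Y) - Z = E + t • P + t ^ 2 • R := by
    simp only [E, P, R, Matrix.add_mul, Matrix.mul_add, Matrix.smul_mul, Matrix.mul_smul,
      smul_add, smul_smul]
    module
  have key (t : ℝ) : 0 ≤ (2 * (vec E ⬝ᵥ vec P)) * t
      + (vec P ⬝ᵥ vec P + 2 * (vec E ⬝ᵥ vec R)) * t ^ 2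
      + (2 * (vec P ⬝ᵥ vec R)) * t ^ 3 + (vec R ⬝ᵥ vec R) * t ^ 4 := by
    have h := hmin (A + t • X) (B + t • Y)
    rw [hexp] at h
    simp only [vec_add, vec_smul, dotProduct_add, add_dotProduct, dotProduct_smul,
      smul_dotProduct, smul_eq_mul, dotProduct_comm (vec P) (vec E),
      dotProduct_comm (vec R) (vec E), dotProduct_comm (vec R) (vec P)] at h
    linear_combination h
  obtain ⟨h₁, h₂⟩ := coeffs_of_forall_quartic_nonneg key
  exact ⟨by linarith, h₂⟩

lemma residual_mul_transpose_eq_zero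
    (hmin : ∀ (A' : Matrix m k ℝ) (B' : Matrix k n ℝ),
      vec (A * B - Z) ⬝ᵥ vec (A * B - Z) ≤ vec (A' * B' - Z) ⬝ᵥ vec (A' * B' - Z)) :
    (A * B - Z) * Bᵀ = 0 := by
  have h := (residual_orthogonal_and_hessianForm_nonneg hmin ((A * B - Z) * Bᵀ) 0).1
  rw [Matrix.mul_zero, zero_add, dotProduct_comm, ← vec_dotProduct_vec_mul_transpose] at h
  exact vec_eq_zero_iff.mp (dotProduct_self_eq_zero.mp h)

lemma transpose_mul_residual_eq_zero
    (hmin : ∀ (A' : Matrix m k ℝ) (B' : Matrix k n ℝ),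
      vec (A * B - Z) ⬝ᵥ vec (A * B - Z) ≤ vec (A' * B' - Z) ⬝ᵥ vec (A' * B' - Z)) :
    Aᵀ * (A * B - Z) = 0 := by
  have h := (residual_orthogonal_and_hessianForm_nonneg hmin 0 (Aᵀ * (A * B - Z))).1
  rw [Matrix.zero_mul, add_zero, dotProduct_comm, ← vec_dotProduct_vec_transpose_mul] at h
  exact vec_eq_zero_iff.mp (dotProduct_self_eq_zero.mp h)

lemma mul_ne_zero_of_isMin [Nonempty k] (hZ : Z ≠ 0)
    (hmin : ∀ (A' : Matrix m k ℝ) (B' : Matrix k n ℝ),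
      vec (A * B - Z) ⬝ᵥ vec (A * B - Z) ≤ vec (A' * B' - Z) ⬝ᵥ vec (A' * B' - Z)) :
    A * B ≠ 0 := by
  classical
  intro hAB
  obtain ⟨i, j, hij⟩ : ∃ i j, Z i j ≠ 0 := by
    by_contra! h
    exact hZ (Matrix.ext h)
  -- the rank-one matrix keeping only the entry `Z i j` fits `Z` strictly better than `0`
  have h := hmin (single i (Classical.arbitrary k) (Z i j)) (single (Classical.arbitrary k) j 1)
  rw [hAB, single_mul_single_same, mul_one] at h
  simp only [zero_sub, vec_neg, dotProduct_neg, neg_dotProduct, dotProduct_comm (vec Z), neg_neg,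
    vec_sub, vec_single, dotProduct_sub, dotProduct_single, Pi.sub_apply, Pi.single_eq_same, vec,
    sub_self, zero_mul, sub_dotProduct, single_dotProduct, neg_sub, le_sub_self_iff] at h
  linarith [mul_self_pos.mpr hij]

end Minimizer

section LoraHessian

variable {a b r : ℕ}

lemma commM_mulVec_vec {k l : ℕ} (X : Matrix (Fin k) (Fin l) ℝ) :
    commM k l *ᵥ vec X = vec Xᵀ := by
  ext ⟨i, j⟩
  simp [commM, mulVec, dotProduct, Fintype.sum_prod_type, vec, ite_and]

/-- The Hessian `H` of the statement; its index types make it act on `Sum.elim (vec X) (vec Y)`,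
with Mathlib's column-stacking `vec`. -/
def loraHessian (A : Matrix (Fin a) (Fin r) ℝ) (B : Matrix (Fin r) (Fin b) ℝ)
    (Z : Matrix (Fin a) (Fin b) ℝ) :
    Matrix ((Fin r × Fin a) ⊕ (Fin b × Fin r)) ((Fin r × Fin a) ⊕ (Fin b × Fin r)) ℝ :=
  Matrix.fromBlocks
      ((B * Bᵀ) ⊗ₖ (1 : Matrix (Fin a) (Fin a) ℝ)) (B ⊗ₖ A)
      (Bᵀ ⊗ₖ Aᵀ) ((1 : Matrix (Fin b) (Fin b) ℝ) ⊗ₖ (Aᵀ * A))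
    + Matrix.fromBlocks 0
        (((1 : Matrix (Fin r) (Fin r) ℝ) ⊗ₖ (A * B - Z)) * commM r b)
        (((A * B - Z)ᵀ ⊗ₖ (1 : Matrix (Fin r) (Fin r) ℝ)) * commM a r)
        0

lemma loraHessian_mulVec (A : Matrix (Fin a) (Fin r) ℝ) (B : Matrix (Fin r) (Fin b) ℝ)
    (Z : Matrix (Fin a) (Fin b) ℝ) (X : Matrix (Fin a) (Fin r) ℝ) (Y : Matrix (Fin r) (Fin b) ℝ) :
    loraHessian A B Z *ᵥ Sum.elim (vec X) (vec Y) =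
      Sum.elim (vec (X * (B * Bᵀ) + A * Y * Bᵀ + (A * B - Z) * Yᵀ))
        (vec (Aᵀ * A * Y + Aᵀ * X * B + Xᵀ * (A * B - Z))) := by
  simp only [loraHessian, add_mulVec, fromBlocks_mulVec, Sum.elim_comp_inl, Sum.elim_comp_inr,
    ← mulVec_mulVec, commM_mulVec_vec, kronecker_mulVec_vec, vec_add]
  simp only [transpose_mul, transpose_transpose, transpose_one, Matrix.one_mul, Matrix.mul_one,
    zero_mulVec, zero_add, add_zero]
  ext (_ | _)
  · simp only [Pi.add_apply, Sum.elim_inl]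
  · simp only [Pi.add_apply, Sum.elim_inr]
    ring

lemma dotProduct_loraHessian_mulVec (A : Matrix (Fin a) (Fin r) ℝ) (B : Matrix (Fin r) (Fin b) ℝ)
    (Z : Matrix (Fin a) (Fin b) ℝ) (X : Matrix (Fin a) (Fin r) ℝ) (Y : Matrix (Fin r) (Fin b) ℝ) :
    Sum.elim (vec X) (vec Y) ⬝ᵥ loraHessian A B Z *ᵥ Sum.elim (vec X) (vec Y) =
      hessianForm A B (A * B - Z) X Y := by
  rw [loraHessian_mulVec, sumElim_dotProduct_sumElim, hessianForm, ← Matrix.mul_assoc X B,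
    Matrix.mul_assoc Aᵀ A, Matrix.mul_assoc Aᵀ X]
  simp only [vec_add, dotProduct_add, add_dotProduct, vec_dotProduct_vec_mul_transpose,
    vec_dotProduct_vec_transpose_mul, dotProduct_comm (vec (X * B)),
    dotProduct_comm (vec (X * Y))]
  ring

lemma exists_loraHessian_mulVec_eq_smul {A : Matrix (Fin a) (Fin r) ℝ}
    {B : Matrix (Fin r) (Fin b) ℝ} {Z : Matrix (Fin a) (Fin b) ℝ} (hEB : (A * B - Z) * Bᵀ = 0)
    (hAE : Aᵀ * (A * B - Z) = 0) {μA μB : ℝ} {vA : Fin r → ℝ} {vB : Fin b → ℝ} (hvA0 : vA ≠ 0)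
    (hvB0 : vB ≠ 0) (hvA : (Aᵀ * A) *ᵥ vA = μA • vA) (hvB : (Bᵀ * B) *ᵥ vB = μB • vB)
    (hμA : μA ≠ 0) (hμB : μB ≠ 0) :
    ∃ v, v ≠ 0 ∧ loraHessian A B Z *ᵥ v = (μA + μB) • v := by
  obtain ⟨h₁, h₂⟩ := hessian_eigenpair hEB hAE hvA hvB hμB
  refine ⟨Sum.elim (vec (vecMulVec (A *ᵥ vA) (B *ᵥ vB))) (vec (μA • vecMulVec vA vB)), ?_, ?_⟩
  · obtain ⟨i, hi⟩ := Function.ne_iff.mp hvA0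
    obtain ⟨j, hj⟩ := Function.ne_iff.mp hvB0
    refine Function.ne_iff.mpr ⟨Sum.inr (j, i), ?_⟩
    simpa [vec, vecMulVec_apply, hμA] using And.intro hi hj
  · rw [loraHessian_mulVec, h₁, h₂, vec_smul, vec_smul]
    ext (_ | _) <;> rfl

lemma dotProduct_loraHessian_mulVec_le {A : Matrix (Fin a) (Fin r) ℝ}
    {B : Matrix (Fin r) (Fin b) ℝ} {Z : Matrix (Fin a) (Fin b) ℝ} {μA μB : ℝ} (hμA : 0 < μA)
    (hμB : 0 < μB) (hQ : ∀ X Y, 0 ≤ hessianForm A B (A * B - Z) X Y)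
    (hA : ∀ u, (A *ᵥ u) ⬝ᵥ (A *ᵥ u) ≤ μA * (u ⬝ᵥ u))
    (hB : ∀ u, (B *ᵥ u) ⬝ᵥ (B *ᵥ u) ≤ μB * (u ⬝ᵥ u)) (v : (Fin r × Fin a) ⊕ (Fin b × Fin r) → ℝ) :
    v ⬝ᵥ loraHessian A B Z *ᵥ v ≤ (μA + μB) * (v ⬝ᵥ v) := by
  obtain ⟨X, Y, rfl⟩ : ∃ X Y, v = Sum.elim (vec X) (vec Y) :=
    ⟨of fun i j => v (.inl (j, i)), of fun i j => v (.inr (j, i)), (Sum.elim_comp_inl_inr v).symm⟩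
  rw [dotProduct_loraHessian_mulVec, sumElim_dotProduct_sumElim]
  exact hessianForm_le hμA hμB hQ (vec_mul_dotProduct_le_of_left hA)
    (vec_mul_dotProduct_le_of_right hμB.le hB) X Y

end LoraHessian

lemma floss_le_floss_iff {a b r : ℕ} (Z : Matrix (Fin a) (Fin b) ℝ)
    (A A' : Matrix (Fin a) (Fin r) ℝ) (B B' : Matrix (Fin r) (Fin b) ℝ) :
    floss Z A B ≤ floss Z A' B' ↔
      vec (A * B - Z) ⬝ᵥ vec (A * B - Z) ≤ vec (A' * B' - Z) ⬝ᵥ vec (A' * B' - Z) := by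
  have hfloss (A : Matrix (Fin a) (Fin r) ℝ) (B : Matrix (Fin r) (Fin b) ℝ) :
      floss Z A B = 1 / 2 * (vec (A * B - Z) ⬝ᵥ vec (A * B - Z)) := by
    simp only [floss, dotProduct, Fintype.sum_prod_type, vec, Matrix.sub_apply]
    rw [Finset.sum_comm]
    congr 1
    exact Finset.sum_congr rfl fun j _ => Finset.sum_congr rfl fun i _ => by ring
  rw [hfloss, hfloss]
  constructor <;> intro h <;> linarith

theorem stmt9_general {a b r : ℕ} (hr : 0 < r) (hrb : r ≤ b)
    (Z : Matrix (Fin a) (Fin b) ℝ) (hZ : r ≤ Z.rank)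
    (A : Matrix (Fin a) (Fin r) ℝ) (B : Matrix (Fin r) (Fin b) ℝ)
    (hmin : ∀ (A' : Matrix (Fin a) (Fin r) ℝ) (B' : Matrix (Fin r) (Fin b) ℝ),
      floss Z A B ≤ floss Z A' B') :
    IsGreatest
      {c : ℝ | ∃ v : (Fin r × Fin a) ⊕ (Fin b × Fin r) → ℝ, v ≠ 0 ∧
        (Matrix.fromBlocks
            ((B * Bᵀ) ⊗ₖ (1 : Matrix (Fin a) (Fin a) ℝ)) (B ⊗ₖ A)
            (Bᵀ ⊗ₖ Aᵀ) ((1 : Matrix (Fin b) (Fin b) ℝ) ⊗ₖ (Aᵀ * A))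
          + Matrix.fromBlocks 0
              (((1 : Matrix (Fin r) (Fin r) ℝ) ⊗ₖ (A * B - Z)) * commM r b)
              (((A * B - Z)ᵀ ⊗ₖ (1 : Matrix (Fin r) (Fin r) ℝ)) * commM a r)
              0).mulVec v = c • v}
      (sv A ⟨0, hr⟩ ^ 2 + sv B ⟨0, lt_of_lt_of_le hr hrb⟩ ^ 2) := by
  change IsGreatest {c | ∃ v, v ≠ 0 ∧ loraHessian A B Z *ᵥ v = c • v} _
  have hmin' A' B' := (floss_le_floss_iff Z A A' B B').mp (hmin A' B')
  have hZ0 : Z ≠ 0 := by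
    rintro rfl
    rw [rank_zero] at hZ
    omega
  have : Nonempty (Fin r) := ⟨⟨0, hr⟩⟩
  have hAB := mul_ne_zero_of_isMin hZ0 hmin'
  obtain ⟨vA, hvA0, hvA, hA⟩ := exists_eigenvector_sv_zero A hr
  obtain ⟨vB, hvB0, hvB, hB⟩ := exists_eigenvector_sv_zero B (lt_of_lt_of_le hr hrb)
  have hμA := pos_of_mulVec_dotProduct_le (fun h => hAB (by rw [h, Matrix.zero_mul])) hA
  have hμB := pos_of_mulVec_dotProduct_le (fun h => hAB (by rw [h, Matrix.mul_zero])) hB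
  refine ⟨exists_loraHessian_mulVec_eq_smul (residual_mul_transpose_eq_zero hmin')
    (transpose_mul_residual_eq_zero hmin') hvA0 hvB0 hvA hvB hμA.ne' hμB.ne', ?_⟩
  rintro c ⟨v, hv0, hv⟩
  exact le_of_mulVec_eq_smul hv0 hv <| dotProduct_loraHessian_mulVec_le hμA hμB
    (fun X Y => (residual_orthogonal_and_hessianForm_nonneg hmin' X Y).2) hA hB v

/-- At a global minimizer `(A,B)` of `f` with `rk Z ≥ r`, the largest eigenvalue of
the Hessian of `f` at `(A,B)` equals `σ_1(A)² + σ_1(B)²`. -/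
theorem stmt9 {a b r : ℕ} (hr : 0 < r) (hra : r ≤ a) (hrb : r ≤ b)
    (Z : Matrix (Fin a) (Fin b) ℝ) (hZ : r ≤ Z.rank)
    (A : Matrix (Fin a) (Fin r) ℝ) (B : Matrix (Fin r) (Fin b) ℝ)
    (hmin : ∀ (A' : Matrix (Fin a) (Fin r) ℝ) (B' : Matrix (Fin r) (Fin b) ℝ),
      floss Z A B ≤ floss Z A' B') :
    IsGreatest
      {c : ℝ | ∃ v : (Fin r × Fin a) ⊕ (Fin b × Fin r) → ℝ, v ≠ 0 ∧
        (Matrix.fromBlocks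
            ((B * Bᵀ) ⊗ₖ (1 : Matrix (Fin a) (Fin a) ℝ)) (B ⊗ₖ A)
            (Bᵀ ⊗ₖ Aᵀ) ((1 : Matrix (Fin b) (Fin b) ℝ) ⊗ₖ (Aᵀ * A))
          + Matrix.fromBlocks 0
              (((1 : Matrix (Fin r) (Fin r) ℝ) ⊗ₖ (A * B - Z)) * commM r b)
              (((A * B - Z)ᵀ ⊗ₖ (1 : Matrix (Fin r) (Fin r) ℝ)) * commM a r)
              0).mulVec v = c • v}
      (sv A ⟨0, hr⟩ ^ 2 + sv B ⟨0, lt_of_lt_of_le hr hrb⟩ ^ 2) :=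
  stmt9_general hr hrb Z hZ A B hmin
end

section
/- Let g : ℝ^{a×b} → ℝ be differentiable, f(A,B) = g(AB), and consider one step of gradient descent on (A,B) with step size τ starting from a hyperbalanced point (A,B) with X = AB. Then the product of the updated factors equals X − τ·((XXᵀ)^{1/2} G + G (XᵀX)^{1/2}) + τ² G Xᵀ G, where G = ∇g(X). -/
/-!
At a hyperbalanced point `A = U S^{1/2}`, `B = S^{1/2} Vᵀ` the factors are balanced,
`Aᵀ A = S = B Bᵀ`. Hence `(A Aᵀ)² = A (Aᵀ A) Aᵀ = A B Bᵀ Aᵀ = X Xᵀ`, and likewise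
`(Bᵀ B)² = Xᵀ X`; by uniqueness of positive semidefinite square roots,
`(X Xᵀ)^{1/2} = A Aᵀ` and `(Xᵀ X)^{1/2} = Bᵀ B`. Expanding the product of the updated factors
then gives the claimed formula.
-/

open Matrix

attribute [local instance] Matrix.frobeniusNormedAddCommGroup Matrix.frobeniusNormedSpace

open scoped ComplexOrder in
/-- The positive semidefinite square root of a positive semidefinite matrix
(the definition `Matrix.PosSemidef.sqrt` of the older Mathlib, since removed). -/
noncomputable def Matrix.PosSemidef.sqrt {n : Type*} [Fintype n] [DecidableEq n] {𝕜 : Type*}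
    [RCLike 𝕜] {A : Matrix n n 𝕜} (hA : A.PosSemidef) : Matrix n n 𝕜 :=
  hA.1.eigenvectorUnitary.1 * diagonal ((↑) ∘ (√·) ∘ hA.1.eigenvalues) *
    (star hA.1.eigenvectorUnitary : Matrix n n 𝕜)

section SquareRoot

variable {n 𝕜 : Type*} [Fintype n] [DecidableEq n] [RCLike 𝕜]

open scoped MatrixOrder ComplexOrder

theorem Matrix.PosSemidef.sqrt_eq_cfcSqrt {M : Matrix n n 𝕜} (hM : M.PosSemidef) :
    hM.sqrt = CFC.sqrt M := by
  rw [CFC.sqrt_eq_cfc, cfc_nnreal_eq_real _ M, hM.1.cfc_eq]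
  simp only [sqrt, Function.comp_def, IsHermitian.cfc, Real.coe_sqrt, Real.coe_toNNReal',
    Unitary.conjStarAlgAut_apply]
  congr 3
  funext i
  rw [max_eq_left (hM.eigenvalues_nonneg i)]

theorem Matrix.PosSemidef.sqrt_eq_of_sq_eq {M : Matrix n n 𝕜} (hM : M.PosSemidef)
    {P : Matrix n n 𝕜} (hP : P.PosSemidef) (h : P ^ 2 = M) : hM.sqrt = P := by
  rw [hM.sqrt_eq_cfcSqrt, CFC.sqrt_eq_iff M P hM.nonneg hP.nonneg, ← sq, h]

end SquareRoot

section Factorization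

variable {R : Type*} [CommRing R] {m n k : Type*} [Fintype m] [Fintype n] [Fintype k]

theorem Matrix.transpose_mul_self_mul_diagonal [DecidableEq k] {U : Matrix m k R}
    (hU : Uᵀ * U = 1) (s : k → R) :
    (U * diagonal s)ᵀ * (U * diagonal s) = diagonal (s * s) := by
  rw [transpose_mul, diagonal_transpose, Matrix.mul_assoc, ← Matrix.mul_assoc Uᵀ, hU,
    Matrix.one_mul, diagonal_mul_diagonal]
  rfl

theorem Matrix.diagonal_mul_transpose_mul_self [DecidableEq k] {V : Matrix n k R}
    (hV : Vᵀ * V = 1) (s : k → R) :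
    (diagonal s * Vᵀ) * (diagonal s * Vᵀ)ᵀ = diagonal (s * s) := by
  rw [transpose_mul, transpose_transpose, diagonal_transpose, Matrix.mul_assoc,
    ← Matrix.mul_assoc Vᵀ, hV, Matrix.one_mul, diagonal_mul_diagonal]
  rfl

variable {A : Matrix m k R} {B : Matrix k n R}

theorem Matrix.mul_transpose_self_sq_of_balanced [DecidableEq m] (hAB : Aᵀ * A = B * Bᵀ) :
    (A * Aᵀ) ^ 2 = (A * B) * (A * B)ᵀ := by
  rw [sq, transpose_mul, Matrix.mul_assoc A, ← Matrix.mul_assoc Aᵀ A, hAB]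
  simp only [Matrix.mul_assoc]

theorem Matrix.transpose_mul_self_sq_of_balanced [DecidableEq n] (hAB : Aᵀ * A = B * Bᵀ) :
    (Bᵀ * B) ^ 2 = (A * B)ᵀ * (A * B) := by
  rw [sq, transpose_mul, Matrix.mul_assoc Bᵀ, ← Matrix.mul_assoc B Bᵀ, ← hAB]
  simp only [Matrix.mul_assoc]

theorem Matrix.sub_smul_mul_sub_smul (G : Matrix m n R) (τ : R) :
    (A - τ • (G * Bᵀ)) * (B - τ • (Aᵀ * G))
      = A * B - τ • (A * Aᵀ * G + G * (Bᵀ * B)) + τ ^ 2 • (G * (A * B)ᵀ * G) := by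
  simp only [Matrix.sub_mul, Matrix.mul_sub, Matrix.smul_mul, Matrix.mul_smul, transpose_mul,
    Matrix.mul_assoc]
  module

end Factorization

theorem stmt17_general {a b r : ℕ}
    (U : Matrix (Fin a) (Fin r) ℝ) (V : Matrix (Fin b) (Fin r) ℝ) (d : Fin r → ℝ)
    (hU : Uᵀ * U = 1) (hV : Vᵀ * V = 1)
    (A : Matrix (Fin a) (Fin r) ℝ) (B : Matrix (Fin r) (Fin b) ℝ)
    (hA : A = U * Matrix.diagonal (fun i => Real.sqrt (d i)))
    (hB : B = Matrix.diagonal (fun i => Real.sqrt (d i)) * Vᵀ)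
    (X : Matrix (Fin a) (Fin b) ℝ) (hX : X = A * B)
    (G : Matrix (Fin a) (Fin b) ℝ)
    (τ : ℝ) :
    ∀ (h1 : (X * Xᵀ).PosSemidef) (h2 : (Xᵀ * X).PosSemidef),
      (A - τ • (G * Bᵀ)) * (B - τ • (Aᵀ * G))
        = X - τ • (h1.sqrt * G + G * h2.sqrt) + (τ ^ 2) • (G * Xᵀ * G) := by
  intro h1 h2
  have balanced : Aᵀ * A = B * Bᵀ := by
    rw [hA, hB, transpose_mul_self_mul_diagonal hU, diagonal_mul_transpose_mul_self hV]
  have sqrt_left : h1.sqrt = A * Aᵀ := by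
    refine h1.sqrt_eq_of_sq_eq ?_ ?_
    · simpa using posSemidef_self_mul_conjTranspose A
    · rw [hX, mul_transpose_self_sq_of_balanced balanced]
  have sqrt_right : h2.sqrt = Bᵀ * B := by
    refine h2.sqrt_eq_of_sq_eq ?_ ?_
    · simpa using posSemidef_conjTranspose_mul_self B
    · rw [hX, transpose_mul_self_sq_of_balanced balanced]
  rw [sqrt_left, sqrt_right, hX, sub_smul_mul_sub_smul]

/-- One gradient-descent step on the factors from a hyperbalanced point: with
`G = ∇g(X)` (Frobenius inner product), `Ã = A - τ G Bᵀ`, `B̃ = B - τ Aᵀ G`, one has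
`Ã B̃ = X - τ((XXᵀ)^{1/2} G + G (XᵀX)^{1/2}) + τ² G Xᵀ G`. -/
theorem stmt17 {a b r : ℕ}
    (g : Matrix (Fin a) (Fin b) ℝ → ℝ) (hg : Differentiable ℝ g)
    (U : Matrix (Fin a) (Fin r) ℝ) (V : Matrix (Fin b) (Fin r) ℝ) (d : Fin r → ℝ)
    (hU : Uᵀ * U = 1) (hV : Vᵀ * V = 1)
    (hd0 : ∀ i, 0 ≤ d i) (hdmono : Antitone d)
    (A : Matrix (Fin a) (Fin r) ℝ) (B : Matrix (Fin r) (Fin b) ℝ)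
    (hA : A = U * Matrix.diagonal (fun i => Real.sqrt (d i)))
    (hB : B = Matrix.diagonal (fun i => Real.sqrt (d i)) * Vᵀ)
    (X : Matrix (Fin a) (Fin b) ℝ) (hX : X = A * B)
    (G : Matrix (Fin a) (Fin b) ℝ)
    (hG : ∀ Hd : Matrix (Fin a) (Fin b) ℝ,
      fderiv ℝ g X Hd = ∑ i, ∑ j, G i j * Hd i j)
    (τ : ℝ) :
    ∀ (h1 : (X * Xᵀ).PosSemidef) (h2 : (Xᵀ * X).PosSemidef),
      (A - τ • (G * Bᵀ)) * (B - τ • (Aᵀ * G))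
        = X - τ • (h1.sqrt * G + G * h2.sqrt) + (τ ^ 2) • (G * Xᵀ * G) :=
  stmt17_general U V d hU hV A B hA hB X hX G τ
end

section
/- Let H ∈ ℝ^{D×D} be symmetric positive semidefinite with smallest nonzero eigenvalue μ and largest eigenvalue L > 0. Define L_∞ = sup_{u≠0} ⟨Hu,u⟩/‖u‖_∞² and μ_∞ = inf_{u ∈ ker(H)^⊥, u≠0} ‖Hu‖_1²/⟨Hu,u⟩. Then μ ≤ μ_∞ ≤ Dμ and L ≤ L_∞ ≤ DL; consequently κ/D ≤ κ_∞ ≤ Dκ where κ = L/μ and κ_∞ = L_∞/μ_∞. -/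
/-!
Diagonalise `H` in an orthonormal eigenbasis: if `v` are the coordinates of `u`, then
`⟪Hu, u⟫ = ∑ λᵢ vᵢ²`, `‖Hu‖₂² = ∑ λᵢ² vᵢ²` and `‖u‖₂² = ∑ vᵢ²`. Since every eigenvalue lies in
`{0} ∪ [μ, L]`, this gives `⟪Hu, u⟫ ≤ L ‖u‖₂²` and `μ ⟪Hu, u⟫ ≤ ‖Hu‖₂²`. Combined with
`‖w‖∞² ≤ ‖w‖₂² ≤ D ‖w‖∞²` and `‖w‖₂² ≤ ‖w‖₁² ≤ D ‖w‖₂²`, these yield `μ ≤ μ_∞` and `L_∞ ≤ D L`,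
while evaluating both quotients at eigenvectors for `μ` and `L` yields `μ_∞ ≤ D μ` and
`L ≤ L_∞`. The bounds on `κ_∞` follow by dividing.
-/

open Matrix

theorem dotProduct_self_eq_sum_sq {n : Type*} [Fintype n] (v : n → ℝ) :
    v ⬝ᵥ v = ∑ i, v i ^ 2 := by
  simp only [dotProduct, sq]

theorem dotProduct_self_pos {n : Type*} [Fintype n] {v : n → ℝ} (hv : v ≠ 0) : 0 < v ⬝ᵥ v :=
  (Finset.sum_nonneg fun i _ => mul_self_nonneg (v i)).lt_of_ne
    (Ne.symm (dotProduct_self_eq_zero.not.mpr hv))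

section SupNorm

variable {ι : Type*} [Fintype ι]

theorem sq_norm_le_sum_sq (w : ι → ℝ) : ‖w‖ ^ 2 ≤ ∑ i, w i ^ 2 := by
  have hsum := Finset.sum_nonneg fun i (_ : i ∈ Finset.univ) => sq_nonneg (w i)
  refine (Real.le_sqrt (norm_nonneg w) hsum).mp <|
    (pi_norm_le_iff_of_nonneg (Real.sqrt_nonneg _)).mpr fun i =>
      (Real.le_sqrt (norm_nonneg _) hsum).mpr ?_
  rw [Real.norm_eq_abs, sq_abs]
  exact Finset.single_le_sum (fun j _ => sq_nonneg (w j)) (Finset.mem_univ i)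

theorem sum_sq_le_card_mul_sq_norm (w : ι → ℝ) : ∑ i, w i ^ 2 ≤ Fintype.card ι * ‖w‖ ^ 2 := by
  calc ∑ i, w i ^ 2 ≤ ∑ _i : ι, ‖w‖ ^ 2 := Finset.sum_le_sum fun i _ => by
        simpa only [Real.norm_eq_abs, sq_abs] using
          pow_le_pow_left₀ (norm_nonneg _) (norm_le_pi_norm w i) 2
    _ = Fintype.card ι * ‖w‖ ^ 2 := by simp

theorem sum_sq_le_sq_sum_abs (w : ι → ℝ) : ∑ i, w i ^ 2 ≤ (∑ i, |w i|) ^ 2 := by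
  simpa only [sq_abs] using Finset.sum_sq_le_sq_sum_of_nonneg fun i _ => abs_nonneg (w i)

theorem sq_sum_abs_le_card_mul_sum_sq (w : ι → ℝ) :
    (∑ i, |w i|) ^ 2 ≤ Fintype.card ι * ∑ i, w i ^ 2 := by
  simpa only [sq_abs, Finset.card_univ] using
    sq_sum_le_card_mul_sum_sq (s := Finset.univ) (f := fun i => |w i|)

end SupNorm

namespace Matrix

variable {n : Type*} [Fintype n] {H : Matrix n n ℝ}

section Spectral

variable [DecidableEq n]

theorem IsHermitian.exists_eigenbasis_coords (hH : H.IsHermitian) (u : n → ℝ) :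
    ∃ v : n → ℝ, H *ᵥ u ⬝ᵥ u = ∑ i, hH.eigenvalues i * v i ^ 2 ∧
      H *ᵥ u ⬝ᵥ H *ᵥ u = ∑ i, hH.eigenvalues i ^ 2 * v i ^ 2 ∧
      u ⬝ᵥ u = ∑ i, v i ^ 2 := by
  set U : Matrix n n ℝ := (hH.eigenvectorUnitary : Matrix n n ℝ)
  have hU : U ∈ unitaryGroup n ℝ := hH.eigenvectorUnitary.2
  have hdot (x y : n → ℝ) : U *ᵥ x ⬝ᵥ U *ᵥ y = x ⬝ᵥ y := by
    rw [dotProduct_mulVec, vecMul_mulVec, ← conjTranspose_eq_transpose_of_trivial,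
      ← star_eq_conjTranspose, mem_unitaryGroup_iff'.mp hU, vecMul_one]
  set v := star U *ᵥ u
  have hu : u = U *ᵥ v := by rw [mulVec_mulVec, mem_unitaryGroup_iff.mp hU, one_mulVec]
  have hHu : H *ᵥ u = U *ᵥ (diagonal hH.eigenvalues *ᵥ v) := by
    conv_lhs => rw [hH.spectral_theorem]
    simp only [RCLike.ofReal_real_eq_id, CompTriple.comp_eq, Unitary.conjStarAlgAut_apply,
      ← mulVec_mulVec]
    rfl
  refine ⟨v, ?_, ?_, ?_⟩
  · rw [hHu, hu, hdot]
    simp only [dotProduct, mulVec_diagonal]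
    exact Finset.sum_congr rfl fun i _ => by ring
  · rw [hHu, hdot]
    simp only [dotProduct, mulVec_diagonal]
    exact Finset.sum_congr rfl fun i _ => by ring
  · rw [hu, hdot]
    simp only [dotProduct, sq]

theorem IsHermitian.dotProduct_mulVec_self_le (hH : H.IsHermitian) {L : ℝ}
    (hL : ∀ i, hH.eigenvalues i ≤ L) (u : n → ℝ) : H *ᵥ u ⬝ᵥ u ≤ L * (u ⬝ᵥ u) := by
  obtain ⟨v, hquad, -, hnorm⟩ := hH.exists_eigenbasis_coords u
  rw [hquad, hnorm, Finset.mul_sum]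
  exact Finset.sum_le_sum fun i _ => mul_le_mul_of_nonneg_right (hL i) (sq_nonneg _)

theorem IsHermitian.mul_dotProduct_mulVec_self_le (hH : H.IsHermitian) {μ : ℝ} (hμ : 0 ≤ μ)
    (hgap : ∀ i, hH.eigenvalues i = 0 ∨ μ ≤ hH.eigenvalues i) (u : n → ℝ) :
    μ * (H *ᵥ u ⬝ᵥ u) ≤ H *ᵥ u ⬝ᵥ H *ᵥ u := by
  obtain ⟨v, hquad, hsq, -⟩ := hH.exists_eigenbasis_coords u
  rw [hquad, hsq, Finset.mul_sum]
  refine Finset.sum_le_sum fun i _ => ?_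
  rcases hgap i with h | h
  · simp [h]
  · rw [← mul_assoc, sq (hH.eigenvalues i)]
    exact mul_le_mul_of_nonneg_right (mul_le_mul_of_nonneg_right h (hμ.trans h)) (sq_nonneg _)

theorem IsHermitian.exists_mulVec_eq_eigenvalues_smul (hH : H.IsHermitian) (i : n) :
    ∃ w : n → ℝ, w ≠ 0 ∧ H *ᵥ w = hH.eigenvalues i • w :=
  ⟨_, (WithLp.ofLp_eq_zero 2).ne.2 <| hH.eigenvectorBasis.orthonormal.ne_zero i,
    hH.mulVec_eigenvectorBasis i⟩

end Spectral

theorem IsHermitian.dotProduct_eq_zero_of_mulVec_eq_smul (hH : H.IsHermitian) {w v : n → ℝ}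
    {c : ℝ} (hc : c ≠ 0) (hw : H *ᵥ w = c • w) (hv : H *ᵥ v = 0) : w ⬝ᵥ v = 0 := by
  have : c * (w ⬝ᵥ v) = 0 := by
    rw [← smul_eq_mul, ← smul_dotProduct, ← hw, dotProduct_comm, dotProduct_mulVec,
      ← mulVec_transpose, ← conjTranspose_eq_transpose_of_trivial, hH, hv, zero_dotProduct]
  exact (mul_eq_zero.mp this).resolve_left hc

theorem PosSemidef.dotProduct_mulVec_self_nonneg (hH : H.PosSemidef) (u : n → ℝ) :
    0 ≤ H *ᵥ u ⬝ᵥ u := by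
  simpa only [star_trivial, dotProduct_comm u] using hH.dotProduct_mulVec_nonneg u

theorem PosSemidef.nonneg_of_mulVec_eq_smul (hH : H.PosSemidef) {w : n → ℝ} {c : ℝ}
    (hw0 : w ≠ 0) (hw : H *ᵥ w = c • w) : 0 ≤ c := by
  have := hH.dotProduct_mulVec_self_nonneg w
  rw [hw, smul_dotProduct, smul_eq_mul] at this
  exact nonneg_of_mul_nonneg_left this (dotProduct_self_pos hw0)

/-- The constants of the statement are `L_∞ = sSup (smoothnessRatios H)` and
`μ_∞ = sInf (strongConvexityRatios H)`, for the sup norm on `n → ℝ` and its dual ℓ¹ norm. -/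
def smoothnessRatios (H : Matrix n n ℝ) : Set ℝ :=
  {x | ∃ u : n → ℝ, u ≠ 0 ∧ x = (H *ᵥ u ⬝ᵥ u) / ‖u‖ ^ 2}

def strongConvexityRatios (H : Matrix n n ℝ) : Set ℝ :=
  {x | ∃ u : n → ℝ, u ≠ 0 ∧ (∀ v : n → ℝ, H *ᵥ v = 0 → u ⬝ᵥ v = 0) ∧
    x = (∑ i, |(H *ᵥ u) i|) ^ 2 / (H *ᵥ u ⬝ᵥ u)}

section Smoothness

variable [DecidableEq n] {L : ℝ}

theorem IsHermitian.le_card_mul_of_mem_smoothnessRatios (hH : H.IsHermitian)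
    (hL : ∀ i, hH.eigenvalues i ≤ L) (hL0 : 0 ≤ L) {x : ℝ} (hx : x ∈ smoothnessRatios H) :
    x ≤ Fintype.card n * L := by
  obtain ⟨u, hu, rfl⟩ := hx
  rw [div_le_iff₀ (by positivity)]
  calc H *ᵥ u ⬝ᵥ u ≤ L * ∑ i, u i ^ 2 := by
        rw [← dotProduct_self_eq_sum_sq]; exact hH.dotProduct_mulVec_self_le hL u
    _ ≤ L * (Fintype.card n * ‖u‖ ^ 2) := by gcongr; exact sum_sq_le_card_mul_sq_norm u
    _ = Fintype.card n * L * ‖u‖ ^ 2 := by ring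

theorem IsHermitian.sSup_smoothnessRatios_le (hH : H.IsHermitian)
    (hL : ∀ i, hH.eigenvalues i ≤ L) (hL0 : 0 ≤ L) :
    sSup (smoothnessRatios H) ≤ Fintype.card n * L :=
  Real.sSup_le (fun _ => hH.le_card_mul_of_mem_smoothnessRatios hL hL0) (by positivity)

theorem IsHermitian.le_sSup_smoothnessRatios (hH : H.IsHermitian)
    (hL : ∀ i, hH.eigenvalues i ≤ L) (hL0 : 0 ≤ L) {w : n → ℝ} {c : ℝ} (hw0 : w ≠ 0)
    (hc : 0 ≤ c) (hw : H *ᵥ w = c • w) : c ≤ sSup (smoothnessRatios H) := by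
  refine le_csSup ⟨_, fun _ => hH.le_card_mul_of_mem_smoothnessRatios hL hL0⟩ ⟨w, hw0, rfl⟩
    |>.trans' ?_
  rw [le_div_iff₀ (by positivity), hw, smul_dotProduct, smul_eq_mul, dotProduct_self_eq_sum_sq]
  exact mul_le_mul_of_nonneg_left (sq_norm_le_sum_sq w) hc

end Smoothness

section StrongConvexity

theorem PosSemidef.nonneg_of_mem_strongConvexityRatios (hH : H.PosSemidef) {x : ℝ}
    (hx : x ∈ strongConvexityRatios H) : 0 ≤ x := by
  obtain ⟨u, -, -, rfl⟩ := hx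
  exact div_nonneg (sq_nonneg _) (hH.dotProduct_mulVec_self_nonneg u)

theorem IsHermitian.mem_strongConvexityRatios (hH : H.IsHermitian) {w : n → ℝ} {c : ℝ}
    (hw0 : w ≠ 0) (hc : c ≠ 0) (hw : H *ᵥ w = c • w) :
    (∑ i, |(H *ᵥ w) i|) ^ 2 / (H *ᵥ w ⬝ᵥ w) ∈ strongConvexityRatios H :=
  ⟨w, hw0, fun _ => hH.dotProduct_eq_zero_of_mulVec_eq_smul hc hw, rfl⟩

theorem PosSemidef.sInf_strongConvexityRatios_le (hH : H.PosSemidef) {w : n → ℝ} {c : ℝ}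
    (hw0 : w ≠ 0) (hc : 0 < c) (hw : H *ᵥ w = c • w) :
    sInf (strongConvexityRatios H) ≤ Fintype.card n * c := by
  refine csInf_le ⟨0, fun _ => hH.nonneg_of_mem_strongConvexityRatios⟩
    (hH.1.mem_strongConvexityRatios hw0 hc.ne' hw) |>.trans ?_
  have hnum : ∑ i, |(H *ᵥ w) i| = c * ∑ i, |w i| := by
    simp only [hw, Pi.smul_apply, smul_eq_mul, abs_mul, abs_of_pos hc, Finset.mul_sum]
  rw [hnum, hw, smul_dotProduct, smul_eq_mul, div_le_iff₀ (mul_pos hc (dotProduct_self_pos hw0)),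
    dotProduct_self_eq_sum_sq]
  calc (c * ∑ i, |w i|) ^ 2 = c ^ 2 * (∑ i, |w i|) ^ 2 := by ring
    _ ≤ c ^ 2 * (Fintype.card n * ∑ i, w i ^ 2) := by
      gcongr; exact sq_sum_abs_le_card_mul_sum_sq w
    _ = Fintype.card n * c * (c * ∑ i, w i ^ 2) := by ring

variable [DecidableEq n] {μ : ℝ}

theorem PosSemidef.le_of_mem_strongConvexityRatios (hH : H.PosSemidef) (hμ0 : 0 ≤ μ)
    (hgap : ∀ i, hH.1.eigenvalues i = 0 ∨ μ ≤ hH.1.eigenvalues i) {x : ℝ}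
    (hx : x ∈ strongConvexityRatios H) : μ ≤ x := by
  obtain ⟨u, hu0, hker, rfl⟩ := hx
  have hHu : H *ᵥ u ≠ 0 := fun h => hu0 (dotProduct_self_eq_zero.mp (hker u h))
  have hpos : 0 < H *ᵥ u ⬝ᵥ u := by
    refine (hH.dotProduct_mulVec_self_nonneg u).lt_of_ne fun h => hHu ?_
    rw [← hH.dotProduct_mulVec_zero_iff, star_trivial, dotProduct_comm, h]
  rw [le_div_iff₀ hpos]
  calc μ * (H *ᵥ u ⬝ᵥ u) ≤ H *ᵥ u ⬝ᵥ H *ᵥ u := hH.1.mul_dotProduct_mulVec_self_le hμ0 hgap u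
    _ = ∑ i, (H *ᵥ u) i ^ 2 := dotProduct_self_eq_sum_sq _
    _ ≤ (∑ i, |(H *ᵥ u) i|) ^ 2 := sum_sq_le_sq_sum_abs _

theorem PosSemidef.le_sInf_strongConvexityRatios (hH : H.PosSemidef) (hμ0 : 0 ≤ μ)
    (hgap : ∀ i, hH.1.eigenvalues i = 0 ∨ μ ≤ hH.1.eigenvalues i) {w : n → ℝ} {c : ℝ}
    (hw0 : w ≠ 0) (hc : c ≠ 0) (hw : H *ᵥ w = c • w) : μ ≤ sInf (strongConvexityRatios H) :=
  le_csInf ⟨_, hH.1.mem_strongConvexityRatios hw0 hc hw⟩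
    fun _ => hH.le_of_mem_strongConvexityRatios hμ0 hgap

end StrongConvexity

end Matrix

theorem div_div_le_div_and_div_le_mul_div {μ L m M d : ℝ} (hμ : 0 < μ) (hL : 0 ≤ L)
    (hμm : μ ≤ m) (hmμ : m ≤ d * μ) (hLM : L ≤ M) (hML : M ≤ d * L) :
    L / μ / d ≤ M / m ∧ M / m ≤ d * (L / μ) := by
  constructor
  · rw [div_div]
    exact div_le_div₀ (hL.trans hLM) hLM (hμ.trans_le hμm) (by linarith)
  · rw [← mul_div_assoc]
    exact div_le_div₀ ((hL.trans hLM).trans hML) hML hμ hμm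

theorem stmt18_general {D : ℕ} (H : Matrix (Fin D) (Fin D) ℝ) (hH : H.PosSemidef)
    (μ L : ℝ)
    (hL : IsGreatest {c : ℝ | ∃ w : Fin D → ℝ, w ≠ 0 ∧ H.mulVec w = c • w} L)
    (hμ : IsLeast {c : ℝ | c ≠ 0 ∧ ∃ w : Fin D → ℝ, w ≠ 0 ∧ H.mulVec w = c • w} μ) :
    μ ≤ sInf {x : ℝ | ∃ u : Fin D → ℝ, u ≠ 0 ∧
          (∀ v : Fin D → ℝ, H.mulVec v = 0 → u ⬝ᵥ v = 0) ∧
          x = (∑ i, |H.mulVec u i|) ^ 2 / (H.mulVec u ⬝ᵥ u)} ∧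
    sInf {x : ℝ | ∃ u : Fin D → ℝ, u ≠ 0 ∧
          (∀ v : Fin D → ℝ, H.mulVec v = 0 → u ⬝ᵥ v = 0) ∧
          x = (∑ i, |H.mulVec u i|) ^ 2 / (H.mulVec u ⬝ᵥ u)} ≤ D * μ ∧
    L ≤ sSup {x : ℝ | ∃ u : Fin D → ℝ, u ≠ 0 ∧ x = (H.mulVec u ⬝ᵥ u) / ‖u‖ ^ 2} ∧
    sSup {x : ℝ | ∃ u : Fin D → ℝ, u ≠ 0 ∧ x = (H.mulVec u ⬝ᵥ u) / ‖u‖ ^ 2} ≤ D * L ∧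
    (L / μ) / D ≤
      sSup {x : ℝ | ∃ u : Fin D → ℝ, u ≠ 0 ∧ x = (H.mulVec u ⬝ᵥ u) / ‖u‖ ^ 2} /
        sInf {x : ℝ | ∃ u : Fin D → ℝ, u ≠ 0 ∧
          (∀ v : Fin D → ℝ, H.mulVec v = 0 → u ⬝ᵥ v = 0) ∧
          x = (∑ i, |H.mulVec u i|) ^ 2 / (H.mulVec u ⬝ᵥ u)} ∧
    sSup {x : ℝ | ∃ u : Fin D → ℝ, u ≠ 0 ∧ x = (H.mulVec u ⬝ᵥ u) / ‖u‖ ^ 2} /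
        sInf {x : ℝ | ∃ u : Fin D → ℝ, u ≠ 0 ∧
          (∀ v : Fin D → ℝ, H.mulVec v = 0 → u ⬝ᵥ v = 0) ∧
          x = (∑ i, |H.mulVec u i|) ^ 2 / (H.mulVec u ⬝ᵥ u)}
      ≤ D * (L / μ) := by
  obtain ⟨hμ0, wμ, hwμ0, hwμ⟩ := hμ.1
  obtain ⟨wL, hwL0, hwL⟩ := hL.1
  have hμpos : 0 < μ := (hH.nonneg_of_mulVec_eq_smul hwμ0 hwμ).lt_of_ne' hμ0
  have hLpos : 0 < L := hμpos.trans_le (hL.2 ⟨wμ, hwμ0, hwμ⟩)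
  have heig := hH.1.exists_mulVec_eq_eigenvalues_smul
  have heigL : ∀ i, hH.1.eigenvalues i ≤ L := fun i => hL.2 (heig i)
  have hgap : ∀ i, hH.1.eigenvalues i = 0 ∨ μ ≤ hH.1.eigenvalues i := fun i =>
    (eq_or_ne _ 0).imp_right fun h => hμ.2 ⟨h, heig i⟩
  have hμ_le : μ ≤ sInf (strongConvexityRatios H) :=
    hH.le_sInf_strongConvexityRatios hμpos.le hgap hwμ0 hμ0 hwμ
  have hμ_ge : sInf (strongConvexityRatios H) ≤ D * μ := by
    simpa only [Fintype.card_fin] using hH.sInf_strongConvexityRatios_le hwμ0 hμpos hwμ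
  have hL_le : L ≤ sSup (smoothnessRatios H) :=
    hH.1.le_sSup_smoothnessRatios heigL hLpos.le hwL0 hLpos.le hwL
  have hL_ge : sSup (smoothnessRatios H) ≤ D * L := by
    simpa only [Fintype.card_fin] using hH.1.sSup_smoothnessRatios_le heigL hLpos.le
  exact ⟨hμ_le, hμ_ge, hL_le, hL_ge,
    div_div_le_div_and_div_le_mul_div hμpos hLpos.le hμ_le hμ_ge hL_le hL_ge⟩

/-- For a symmetric PSD matrix `H` with smallest nonzero eigenvalue `μ` and largest
eigenvalue `L > 0`, setting `L_∞ = sup ⟨Hu,u⟩/‖u‖_∞²` and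
`μ_∞ = inf_{u ∈ ker(H)ᗮ, u ≠ 0} ‖Hu‖₁²/⟨Hu,u⟩`, one has `μ ≤ μ_∞ ≤ Dμ`,
`L ≤ L_∞ ≤ DL`, and hence `κ/D ≤ κ_∞ ≤ Dκ` with `κ = L/μ`, `κ_∞ = L_∞/μ_∞`.
(Here `‖u‖` is the sup norm on `Fin D → ℝ`.) -/
theorem stmt18 {D : ℕ} (H : Matrix (Fin D) (Fin D) ℝ) (hH : H.PosSemidef)
    (μ L : ℝ)
    (hL : IsGreatest {c : ℝ | ∃ w : Fin D → ℝ, w ≠ 0 ∧ H.mulVec w = c • w} L)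
    (hμ : IsLeast {c : ℝ | c ≠ 0 ∧ ∃ w : Fin D → ℝ, w ≠ 0 ∧ H.mulVec w = c • w} μ)
    (hμpos : 0 < μ) (hLpos : 0 < L) :
    μ ≤ sInf {x : ℝ | ∃ u : Fin D → ℝ, u ≠ 0 ∧
          (∀ v : Fin D → ℝ, H.mulVec v = 0 → u ⬝ᵥ v = 0) ∧
          x = (∑ i, |H.mulVec u i|) ^ 2 / (H.mulVec u ⬝ᵥ u)} ∧
    sInf {x : ℝ | ∃ u : Fin D → ℝ, u ≠ 0 ∧
          (∀ v : Fin D → ℝ, H.mulVec v = 0 → u ⬝ᵥ v = 0) ∧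
          x = (∑ i, |H.mulVec u i|) ^ 2 / (H.mulVec u ⬝ᵥ u)} ≤ D * μ ∧
    L ≤ sSup {x : ℝ | ∃ u : Fin D → ℝ, u ≠ 0 ∧ x = (H.mulVec u ⬝ᵥ u) / ‖u‖ ^ 2} ∧
    sSup {x : ℝ | ∃ u : Fin D → ℝ, u ≠ 0 ∧ x = (H.mulVec u ⬝ᵥ u) / ‖u‖ ^ 2} ≤ D * L ∧
    (L / μ) / D ≤
      sSup {x : ℝ | ∃ u : Fin D → ℝ, u ≠ 0 ∧ x = (H.mulVec u ⬝ᵥ u) / ‖u‖ ^ 2} /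
        sInf {x : ℝ | ∃ u : Fin D → ℝ, u ≠ 0 ∧
          (∀ v : Fin D → ℝ, H.mulVec v = 0 → u ⬝ᵥ v = 0) ∧
          x = (∑ i, |H.mulVec u i|) ^ 2 / (H.mulVec u ⬝ᵥ u)} ∧
    sSup {x : ℝ | ∃ u : Fin D → ℝ, u ≠ 0 ∧ x = (H.mulVec u ⬝ᵥ u) / ‖u‖ ^ 2} /
        sInf {x : ℝ | ∃ u : Fin D → ℝ, u ≠ 0 ∧
          (∀ v : Fin D → ℝ, H.mulVec v = 0 → u ⬝ᵥ v = 0) ∧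
          x = (∑ i, |H.mulVec u i|) ^ 2 / (H.mulVec u ⬝ᵥ u)}
      ≤ D * (L / μ) :=
  stmt18_general H hH μ L hL hμ
end
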